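/- arXiv:2109.08509 — 6 statements merged into one kernel-verified Lean document; each statement's English description precedes it below -/
import Mathlib

section
/- Let $A < B$ with $1 < A$, $\tau > 0$, and suppose $\tau\log A, \tau\log B \in 2\pi\mathbb{Z}$. Then $\frac{1}{2}\int_{A}^{B}(1-u^{-1})\cos(\tau\log u)\,du = \frac{B-A}{2(\tau^{2}+1)} > 0$. -/
open Real

theorem stmt_1 (A B τ : ℝ) (hA : 1 < A) (hAB : A < B) (hτ : 0 < τ)
    (hkA : ∃ k : ℤ, τ * Real.log A = 2 * π * k)
    (hkB : ∃ k : ℤ, τ * Real.log B = 2 * π * k) :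
    (1/2) * ∫ u in A..B, (1 - u⁻¹) * Real.cos (τ * Real.log u) = (B - A) / (2 * (τ^2 + 1)) ∧
    (0 : ℝ) < (B - A) / (2 * (τ^2 + 1)) := by
  obtain ⟨kA, hkA⟩ := hkA
  obtain ⟨kB, hkB⟩ := hkB
  have hτ2 : (0:ℝ) < τ^2 + 1 := by positivity
  constructor
  · set F : ℝ → ℝ := fun u =>
      u * (Real.cos (τ * Real.log u) + τ * Real.sin (τ * Real.log u)) / (τ^2 + 1)
        - Real.sin (τ * Real.log u) / τ with hF
    have hderiv : ∀ u ∈ Set.uIcc A B,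
        HasDerivAt F ((1 - u⁻¹) * Real.cos (τ * Real.log u)) u := by
      intro u hu
      rw [Set.uIcc_of_le hAB.le] at hu
      have hu0 : (0:ℝ) < u := by linarith [hu.1]
      have hlog : HasDerivAt (fun u => τ * Real.log u) (τ * u⁻¹) u :=
        (Real.hasDerivAt_log hu0.ne').const_mul τ
      have hcos : HasDerivAt (fun u => Real.cos (τ * Real.log u))
          (-Real.sin (τ * Real.log u) * (τ * u⁻¹)) u := hlog.cos
      have hsin : HasDerivAt (fun u => Real.sin (τ * Real.log u))
          (Real.cos (τ * Real.log u) * (τ * u⁻¹)) u := hlog.sin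
      have h1 : HasDerivAt (fun u => u * (Real.cos (τ * Real.log u) + τ * Real.sin (τ * Real.log u)))
          (1 * (Real.cos (τ * Real.log u) + τ * Real.sin (τ * Real.log u)) +
            u * (-Real.sin (τ * Real.log u) * (τ * u⁻¹) + τ * (Real.cos (τ * Real.log u) * (τ * u⁻¹)))) u :=
        (hasDerivAt_id u).mul (hcos.add (hsin.const_mul τ))
      have h2 := (h1.div_const (τ^2 + 1)).sub (hsin.div_const τ)
      refine h2.congr_deriv ?_
      field_simp
      ring
    have hint : IntervalIntegrable (fun u => (1 - u⁻¹) * Real.cos (τ * Real.log u))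
        MeasureTheory.volume A B := by
      apply ContinuousOn.intervalIntegrable
      apply ContinuousOn.mul
      · exact continuousOn_const.sub (ContinuousOn.inv₀ continuousOn_id (fun u hu => by
          rw [Set.uIcc_of_le hAB.le] at hu; intro h; nlinarith [hu.1]))
      · apply Real.continuous_cos.comp_continuousOn
        apply continuousOn_const.mul
        apply Real.continuousOn_log.mono
        intro u hu
        rw [Set.uIcc_of_le hAB.le] at hu
        simp only [Set.mem_compl_iff, Set.mem_singleton_iff]
        nlinarith [hu.1]
    rw [intervalIntegral.integral_eq_sub_of_hasDerivAt hderiv hint]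
    have cA : Real.cos (τ * Real.log A) = 1 := by
      rw [hkA]; rw [show (2:ℝ) * π * kA = kA * (2 * π) by ring]; exact Real.cos_int_mul_two_pi kA
    have sA : Real.sin (τ * Real.log A) = 0 := by
      rw [hkA, show (2:ℝ) * π * kA = ((2*kA : ℤ):ℝ) * π by push_cast; ring]
      exact Real.sin_int_mul_pi _
    have cB : Real.cos (τ * Real.log B) = 1 := by
      rw [hkB, show (2:ℝ) * π * kB = kB * (2 * π) by ring]; exact Real.cos_int_mul_two_pi kB
    have sB : Real.sin (τ * Real.log B) = 0 := by
      rw [hkB, show (2:ℝ) * π * kB = ((2*kB : ℤ):ℝ) * π by push_cast; ring]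
      exact Real.sin_int_mul_pi _
    simp only [hF, cA, sA, cB, sB]
    field_simp
    ring
  · apply div_pos (by linarith) (by positivity)
end

section
/- Let $\mathrm{Li}(x) = \int_{1}^{x}\frac{1-u^{-1}}{\log u}\,du$ and define $\mathrm{li}(x) = \sum_{\nu=1}^{\infty}\frac{\mu(\nu)}{\nu}\mathrm{Li}(x^{1/\nu})$, where $\mu$ is the Möbius function. Then $\mathrm{li}(x) = \sum_{n=1}^{\infty}\frac{(\log x)^{n}}{n!\,n\,\zeta(n+1)}$ for all $x \ge 1$, where $\zeta$ is the Riemann zeta function. -/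
open Real ArithmeticFunction

noncomputable def Li (x : ℝ) : ℝ := ∫ u in (1:ℝ)..x, (1 - u⁻¹) / Real.log u

noncomputable def li (x : ℝ) : ℝ :=
  ∑' ν : ℕ, ((moebius (ν+1) : ℝ) / (ν+1)) * Li (x ^ ((1:ℝ)/(ν+1)))

noncomputable def Fse (s : ℝ) : ℝ := ∑' n : ℕ, s^(n+1) / ((n+1).factorial * (n+1))

lemma Fse_def (s : ℝ) : Fse s = ∑' n : ℕ, s^(n+1) / ((n+1).factorial * (n+1)) := rfl

noncomputable def gte (L : ℝ) (ν n : ℕ) : ℝ := ((moebius (ν+1) : ℝ) / (ν+1)) *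
      ((L/((ν:ℝ)+1))^(n+1) / ((n+1).factorial * (n+1)))

lemma gte_def (L : ℝ) (ν n : ℕ) : gte L ν n = ((moebius (ν+1) : ℝ) / (ν+1)) *
      ((L/((ν:ℝ)+1))^(n+1) / ((n+1).factorial * (n+1))) := rfl

lemma summable_expser (s : ℝ) : Summable (fun n : ℕ => s^(n+1) / (n+1).factorial) := by
  have := (Real.summable_pow_div_factorial s).comp_injective (fun a b h => Nat.succ_injective h : Function.Injective Nat.succ)
  exact this

lemma summable_Fse (s : ℝ) : Summable (fun n : ℕ => s^(n+1) / ((n+1).factorial * (n+1))) := by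
  refine Summable.of_norm_bounded (summable_expser |s|) (fun n => ?_)
  rw [Real.norm_eq_abs, abs_div]
  rw [abs_of_pos (by positivity : (0:ℝ) < ((n+1).factorial * (n+1) : ℝ))]
  rw [abs_pow]
  have h1 : (1:ℝ) ≤ ((n+1).factorial : ℝ) := by exact_mod_cast Nat.one_le_iff_ne_zero.mpr (Nat.factorial_pos (n+1)).ne'
  have h2 : (1:ℝ) ≤ ((n:ℝ)+1) := by
    have := Nat.cast_nonneg (α := ℝ) n
    linarith
  gcongr
  nlinarith

lemma exp_sub_one_eq (s : ℝ) : Real.exp s - 1 = ∑' n : ℕ, s^(n+1) / (n+1).factorial := by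
  have hexp : Real.exp s = ∑' n : ℕ, s^n / n.factorial := by
    rw [Real.exp_eq_exp_ℝ, NormedSpace.exp_eq_tsum_div]
  have := Summable.tsum_eq_zero_add (Real.summable_pow_div_factorial s)
  rw [hexp, this]
  simp

lemma tsum_deriv_eq (s : ℝ) (hs : s ≠ 0) :
    ∑' n : ℕ, s^n / (n+1).factorial = (Real.exp s - 1) / s := by
  have hsum : Summable (fun n : ℕ => s^n / (n+1).factorial) := by
    refine Summable.of_norm_bounded (Real.summable_pow_div_factorial |s|) (fun n => ?_)
    rw [Real.norm_eq_abs, abs_div, abs_pow, Nat.abs_cast]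
    apply div_le_div_of_nonneg_left (by positivity) (by positivity)
    exact_mod_cast Nat.factorial_le (Nat.le_succ n)
  rw [eq_div_iff hs, exp_sub_one_eq]
  rw [← tsum_mul_right]
  exact tsum_congr fun n => by field_simp; ring

lemma hasDerivAt_Fse (s : ℝ) : HasDerivAt Fse (∑' n : ℕ, s^n / (n+1).factorial) s := by
  set R : ℝ := |s| + 1 with hR
  have hRpos : 0 < R := by positivity
  have hsummR : Summable (fun n : ℕ => R^n / (n+1).factorial) := by
    refine Summable.of_norm_bounded (Real.summable_pow_div_factorial R) (fun n => ?_)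
    rw [Real.norm_eq_abs, abs_div, abs_pow, abs_of_pos hRpos, Nat.abs_cast]
    apply div_le_div_of_nonneg_left (by positivity) (by positivity)
    exact_mod_cast Nat.factorial_le (Nat.le_succ n)
  have key : HasDerivAt (fun z : ℝ => ∑' n : ℕ, z^(n+1) / ((n+1).factorial * (n+1)))
      (∑' n : ℕ, s^n / (n+1).factorial) s := by
    refine hasDerivAt_tsum_of_isPreconnected (𝕜 := ℝ)
      (g := fun (n : ℕ) (z : ℝ) => z^(n+1) / ((n+1).factorial * (n+1)))
      (g' := fun (n : ℕ) (z : ℝ) => z^n / (n+1).factorial)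
      hsummR (isOpen_Ioo (a := -R) (b := R))
      (convex_Ioo _ _).isPreconnected (fun n y _ => ?_) (fun n y hy => ?_) (?_ : (0:ℝ) ∈ _) ?_ ?_
    · have h := (hasDerivAt_pow (n+1) y).div_const (((n+1).factorial : ℝ) * ((n:ℝ)+1))
      have heq : ((n + 1 : ℕ) : ℝ) * y ^ (n + 1 - 1) / (((n+1).factorial : ℝ) * ((n:ℝ)+1))
          = y ^ n / ((n+1).factorial : ℝ) := by
        have h1 : ((n+1).factorial : ℝ) ≠ 0 := by positivity
        have h2 : ((n:ℝ)+1) ≠ 0 := by positivity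
        push_cast
        field_simp
      rw [← heq]
      exact h
    · simp only [Real.norm_eq_abs, abs_div, abs_pow, Nat.abs_cast]
      apply div_le_div_of_nonneg_right _ (by positivity)
      refine pow_le_pow_left₀ (abs_nonneg y) ?_ n
      rw [Set.mem_Ioo] at hy
      rw [abs_le]
      constructor <;> linarith [hy.1, hy.2]
    · simp only [Set.mem_Ioo]
      constructor <;> simp [hRpos, hRpos.le] <;> linarith
    · exact summable_zero.congr (fun n => by simp)
    · simp only [Set.mem_Ioo]
      constructor
      · linarith [neg_abs_le s]
      · linarith [le_abs_self s]
  exact key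

lemma Fse_nonneg {s : ℝ} (hs : 0 ≤ s) : 0 ≤ Fse s :=
  tsum_nonneg fun n => by positivity

lemma Fse_zero : Fse 0 = 0 := by
  simp [Fse]

lemma Fse_le {s : ℝ} (hs : 0 ≤ s) : Fse s ≤ Real.exp s - 1 := by
  rw [exp_sub_one_eq]
  refine Summable.tsum_le_tsum (fun n => ?_) (summable_Fse s) (summable_expser s)
  have h1 : (1:ℝ) ≤ ((n+1).factorial : ℝ) := by
    exact_mod_cast Nat.one_le_iff_ne_zero.mpr (Nat.factorial_pos (n+1)).ne'
  have h2 : (1:ℝ) ≤ ((n:ℝ)+1) := by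
    have := Nat.cast_nonneg (α := ℝ) n
    linarith
  gcongr
  nlinarith

noncomputable def PLi (u : ℝ) : ℝ := (1 - u⁻¹) / Real.log u

lemma PLi_nonneg {u : ℝ} (hu : 1 ≤ u) : 0 ≤ PLi u := by
  rcases eq_or_lt_of_le hu with h | h
  · simp [PLi, ← h]
  · apply div_nonneg _ (Real.log_nonneg hu)
    have : u⁻¹ ≤ 1 := inv_le_one_of_one_le₀ hu
    linarith

lemma PLi_le_one {u : ℝ} (hu : 1 ≤ u) : PLi u ≤ 1 := by
  rcases eq_or_lt_of_le hu with h | h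
  · simp [PLi, ← h]
  · have hlogpos : 0 < Real.log u := Real.log_pos h
    rw [PLi, div_le_one hlogpos]
    have h2 : Real.log u⁻¹ ≤ u⁻¹ - 1 := Real.log_le_sub_one_of_pos (by positivity)
    rw [Real.log_inv] at h2
    linarith

lemma PLi_intInt {a b : ℝ} (ha : 1 ≤ a) (hb : 1 ≤ b) :
    IntervalIntegrable PLi MeasureTheory.volume a b := by
  have hmeas : Measurable PLi := (measurable_const.sub measurable_inv).div Real.measurable_log
  rw [intervalIntegrable_iff]
  refine MeasureTheory.Integrable.mono' (g := fun _ => (1:ℝ))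
    (MeasureTheory.integrableOn_const measure_Ioc_lt_top.ne)
    hmeas.aestronglyMeasurable ?_
  rw [MeasureTheory.ae_restrict_iff' measurableSet_uIoc]
  filter_upwards with u hu
  have hu1 : 1 ≤ u := by
    rcases Set.mem_uIoc.mp hu with h | h
    · exact le_trans ha h.1.le
    · exact le_trans hb h.1.le
  rw [Real.norm_eq_abs, abs_of_nonneg (PLi_nonneg hu1)]
  exact PLi_le_one hu1

lemma Li_eq {x : ℝ} (hx : 1 ≤ x) : Li x = Fse (Real.log x) := by
  rcases eq_or_lt_of_le hx with h | h
  · rw [← h]; simp [Li, Fse_zero]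
  · apply eq_of_forall_dist_le
    intro ε hε
    set y := min x (1 + ε/4) with hy
    have hy1 : 1 < y := lt_min h (by linarith)
    have hyx : y ≤ x := min_le_left _ _
    have hyb : y - 1 ≤ ε/4 := by
      have := min_le_right x (1 + ε/4)
      simp only [hy]; linarith
    have hkey : ∫ u in y..x, PLi u = Fse (Real.log x) - Fse (Real.log y) := by
      refine intervalIntegral.integral_eq_sub_of_hasDerivAt (f := fun u => Fse (Real.log u))
        (fun t ht => ?_) (PLi_intInt hy1.le (le_trans hy1.le hyx))
      rw [Set.uIcc_of_le hyx] at ht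
      have ht1 : 1 < t := lt_of_lt_of_le hy1 ht.1
      have htpos : (0:ℝ) < t := by linarith
      have hlog := Real.hasDerivAt_log htpos.ne'
      have hcomp := (hasDerivAt_Fse (Real.log t)).comp t hlog
      have hlogne : Real.log t ≠ 0 := (Real.log_pos ht1).ne'
      have hde : (∑' n : ℕ, (Real.log t)^n / (n+1).factorial) * t⁻¹ = PLi t := by
        rw [tsum_deriv_eq _ hlogne, Real.exp_log htpos, PLi]
        rw [div_mul_eq_mul_div, mul_comm]
        congr 1
        rw [mul_sub, mul_one, inv_mul_cancel₀ htpos.ne']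
      rw [← hde]
      exact hcomp
    have hsplit : Li y + ∫ u in y..x, PLi u = Li x :=
      intervalIntegral.integral_add_adjacent_intervals (PLi_intInt le_rfl hy1.le)
        (PLi_intInt hy1.le (le_trans hy1.le hyx))
    have hLiy : ‖Li y‖ ≤ 1 * |y - 1| := by
      refine intervalIntegral.norm_integral_le_of_norm_le_const (f := PLi) (fun u hu => ?_)
      have hu1 : 1 ≤ u := by
        rcases Set.mem_uIoc.mp hu with h' | h'
        · exact h'.1.le
        · exact le_trans hy1.le h'.1.le
      rw [Real.norm_eq_abs, abs_of_nonneg (PLi_nonneg hu1)]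
      exact PLi_le_one hu1
    have hFy1 : 0 ≤ Fse (Real.log y) := Fse_nonneg (Real.log_nonneg hy1.le)
    have hFy2 : Fse (Real.log y) ≤ y - 1 := by
      have := Fse_le (Real.log_nonneg hy1.le)
      rwa [Real.exp_log (by linarith : (0:ℝ) < y)] at this
    rw [Real.dist_eq]
    have heq : Li x - Fse (Real.log x) = Li y - Fse (Real.log y) := by
      rw [← hsplit, hkey]; ring
    rw [heq]
    have habs : |y - 1| = y - 1 := abs_of_nonneg (by linarith)
    rw [habs, one_mul] at hLiy
    rw [Real.norm_eq_abs] at hLiy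
    have := abs_sub (Li y) (Fse (Real.log y))
    calc |Li y - Fse (Real.log y)| ≤ |Li y| + |Fse (Real.log y)| := abs_sub _ _
      _ ≤ (y - 1) + (y - 1) := by
          rw [abs_of_nonneg hFy1]
          exact add_le_add hLiy hFy2
      _ ≤ ε := by linarith

lemma summable_zeta_pow {m : ℕ} (hm : 2 ≤ m) : Summable (fun k : ℕ => (1:ℝ)/((k:ℝ)+1)^m) := by
  have h1 := Real.summable_one_div_nat_pow.mpr hm
  have h2 := (summable_nat_add_iff (f := fun n : ℕ => (1:ℝ)/(n:ℝ)^m) 1).mpr h1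
  refine h2.congr fun k => ?_
  push_cast
  ring

lemma summable_moebius_pow {m : ℕ} (hm : 2 ≤ m) :
    Summable (fun ν : ℕ => ((moebius (ν+1) : ℤ) : ℝ)/((ν:ℝ)+1)^m) := by
  refine Summable.of_norm_bounded (summable_zeta_pow hm) (fun ν => ?_)
  rw [Real.norm_eq_abs, abs_div]
  rw [abs_of_pos (by positivity : (0:ℝ) < ((ν:ℝ)+1)^m)]
  apply div_le_div_of_nonneg_right _ (by positivity)
  have := abs_moebius_le_one (n := ν+1)
  exact_mod_cast this

lemma zeta_pow_pos {m : ℕ} (hm : 2 ≤ m) : 0 < ∑' k : ℕ, (1:ℝ)/((k:ℝ)+1)^m := by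
  refine Summable.tsum_pos (summable_zeta_pow hm) (fun k => by positivity) 0 (by norm_num)

lemma moebius_zeta_sum {m : ℕ} (hm : 2 ≤ m) :
    (∑' ν : ℕ, ((moebius (ν+1) : ℤ) : ℝ)/((ν:ℝ)+1)^m) * (∑' k : ℕ, (1:ℝ)/((k:ℝ)+1)^m) = 1 := by
  have hs : 1 < ((m:ℂ)).re := by
    simp only [Complex.natCast_re]
    exact_mod_cast lt_of_lt_of_le one_lt_two hm
  have h1 := ArithmeticFunction.LSeries_zeta_mul_Lseries_moebius (s := (m:ℂ)) hs
  have hμ : LSeries (fun n => ((moebius n : ℤ) : ℂ)) (m:ℂ)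
      = ((∑' ν : ℕ, ((moebius (ν+1) : ℤ) : ℝ)/((ν:ℝ)+1)^m : ℝ) : ℂ) := by
    rw [LSeries, Summable.tsum_eq_zero_add (ArithmeticFunction.LSeriesSummable_moebius_iff.mpr hs),
      LSeries.term_zero, zero_add, Complex.ofReal_tsum]
    refine tsum_congr fun ν => ?_
    rw [LSeries.term_of_ne_zero (Nat.succ_ne_zero ν)]
    rw [show ((ν + 1 : ℕ) : ℂ) ^ (m : ℂ) = ((ν + 1 : ℕ) : ℂ) ^ (m : ℕ) from
      Complex.cpow_natCast _ m]
    push_cast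
    norm_num
  have hζ : LSeries (fun n => ((ArithmeticFunction.zeta n : ℕ) : ℂ)) (m:ℂ)
      = ((∑' k : ℕ, (1:ℝ)/((k:ℝ)+1)^m : ℝ) : ℂ) := by
    rw [LSeries, Summable.tsum_eq_zero_add (ArithmeticFunction.LSeriesSummable_zeta_iff.mpr hs),
      LSeries.term_zero, zero_add, Complex.ofReal_tsum]
    refine tsum_congr fun k => ?_
    rw [LSeries.term_of_ne_zero (Nat.succ_ne_zero k)]
    rw [ArithmeticFunction.zeta_apply_ne (Nat.succ_ne_zero k)]
    rw [show ((k + 1 : ℕ) : ℂ) ^ (m : ℂ) = ((k + 1 : ℕ) : ℂ) ^ (m : ℕ) from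
      Complex.cpow_natCast _ m]
    push_cast
    norm_num
  rw [hμ, hζ] at h1
  rw [mul_comm]
  exact_mod_cast h1

theorem stmt_4 (x : ℝ) (hx : 1 ≤ x) :
    li x = ∑' n : ℕ,
      (Real.log x)^(n+1) / ((n+1).factorial * (n+1) * (∑' k : ℕ, (1:ℝ) / (k+1)^(n+2))) := by
  have hxpos : (0:ℝ) < x := by linarith
  set L := Real.log x with hL
  have hL0 : 0 ≤ L := Real.log_nonneg hx
  have hLi : ∀ ν : ℕ, Li (x ^ ((1:ℝ)/(ν+1))) = Fse (L / ((ν:ℝ)+1)) := by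
    intro ν
    have h1 : (1:ℝ) ≤ x ^ ((1:ℝ)/(ν+1)) := Real.one_le_rpow hx (by positivity)
    rw [Li_eq h1, Real.log_rpow hxpos]
    rw [one_div, inv_mul_eq_div]
  set g : ℕ → ℕ → ℝ := gte L with hg
  have hbound : ∀ p : ℕ × ℕ, ‖Function.uncurry g p‖ ≤
      ((1:ℝ)/((p.1:ℝ)+1)^2) * (L^(p.2+1)/((p.2+1).factorial * ((p.2:ℝ)+1))) := by
    rintro ⟨ν, n⟩
    have hν1 : (1:ℝ) ≤ (ν:ℝ)+1 := by
      have := Nat.cast_nonneg (α := ℝ) ν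
      linarith
    have hνpos : (0:ℝ) < (ν:ℝ)+1 := by linarith
    have hbpos : (0:ℝ) < ((n+1).factorial : ℝ) * ((n:ℝ)+1) := by positivity
    have hc : |((moebius (ν+1) : ℝ) / ((ν:ℝ)+1))| ≤ 1/((ν:ℝ)+1) := by
      rw [abs_div, abs_of_pos hνpos]
      gcongr
      have := abs_moebius_le_one (n := ν+1)
      exact_mod_cast this
    have hd0 : (0:ℝ) ≤ (L/((ν:ℝ)+1))^(n+1) / (((n+1).factorial : ℝ) * ((n:ℝ)+1)) := by
      positivity
    have hd2 : (L/((ν:ℝ)+1))^(n+1) / (((n+1).factorial : ℝ) * ((n:ℝ)+1)) ≤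
        (L^(n+1)/((ν:ℝ)+1)) / (((n+1).factorial : ℝ) * ((n:ℝ)+1)) := by
      gcongr
      rw [div_pow]
      gcongr
      exact le_self_pow₀ hν1 (Nat.succ_ne_zero n)
    have habs : ‖Function.uncurry g (ν, n)‖ = |((moebius (ν+1) : ℝ) / ((ν:ℝ)+1))| *
        ((L/((ν:ℝ)+1))^(n+1) / (((n+1).factorial : ℝ) * ((n:ℝ)+1))) := by
      rw [Function.uncurry, hg]
      rw [gte_def, Real.norm_eq_abs, abs_mul, abs_of_nonneg hd0]
    rw [habs]
    calc |((moebius (ν+1) : ℝ) / ((ν:ℝ)+1))| *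
        ((L/((ν:ℝ)+1))^(n+1) / (((n+1).factorial : ℝ) * ((n:ℝ)+1)))
        ≤ (1/((ν:ℝ)+1)) * ((L^(n+1)/((ν:ℝ)+1)) / (((n+1).factorial : ℝ) * ((n:ℝ)+1))) := by
          apply mul_le_mul hc (le_trans hd2 le_rfl) hd0
          positivity
      _ = ((1:ℝ)/((ν:ℝ)+1)^2) * (L^(n+1)/(((n+1).factorial : ℝ) * ((n:ℝ)+1))) := by
          generalize ((ν:ℝ)+1) = a
          ring
  have hsum_un : Summable (Function.uncurry g) := by
    refine Summable.of_norm_bounded ?_ hbound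
    exact (summable_zeta_pow (m := 2) le_rfl).mul_of_nonneg (summable_Fse L)
      (fun ν => by positivity) (fun n => by positivity)
  have step1 : li x = ∑' ν : ℕ, ∑' n : ℕ, g ν n := by
    rw [li]
    refine tsum_congr fun ν => ?_
    rw [hLi ν]
    rw [Fse_def, ← tsum_mul_left]
    exact tsum_congr fun n => by rw [hg, gte_def]
  have step2 : ∑' ν : ℕ, ∑' n : ℕ, g ν n = ∑' n : ℕ, ∑' ν : ℕ, g ν n :=
    (Summable.tsum_comm hsum_un).symm
  rw [step1, step2]
  refine tsum_congr fun n => ?_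
  have hm : 2 ≤ n + 2 := by omega
  have hinner : ∑' ν : ℕ, g ν n =
      (L^(n+1) / (((n+1).factorial : ℝ) * ((n:ℝ)+1))) *
      ∑' ν : ℕ, ((moebius (ν+1) : ℤ) : ℝ)/((ν:ℝ)+1)^(n+2) := by
    rw [← tsum_mul_left]
    refine tsum_congr fun ν => ?_
    have hν : (0:ℝ) < (ν:ℝ)+1 := by positivity
    have hb : (0:ℝ) < ((n+1).factorial : ℝ) * ((n:ℝ)+1) := by positivity
    rw [hg, gte_def, div_pow]
    field_simp
    ring
  rw [hinner]
  have hZpos := zeta_pow_pos (m := n+2) hm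
  have hMZ := moebius_zeta_sum (m := n+2) hm
  have hM : (∑' ν : ℕ, ((moebius (ν+1) : ℤ) : ℝ)/((ν:ℝ)+1)^(n+2)) =
      (∑' k : ℕ, (1:ℝ)/((k:ℝ)+1)^(n+2))⁻¹ :=
    eq_inv_of_mul_eq_one_left (by rw [mul_comm] at hMZ ⊢; exact hMZ)
  rw [hM]
  generalize (∑' (k : ℕ), (1:ℝ) / ((k:ℝ) + 1) ^ (n + 2)) = Z
  generalize ((n:ℝ)+1) = a
  ring
end

section
/- Let $d\Pi$ be a positive measure on $[1,\infty)$ with $d\Pi \le 2\,d\mathrm{Li}$, where $d\mathrm{Li}(u) = \frac{1-u^{-1}}{\log u}du \le du$. Then the measure $dN = \exp^{*}(d\Pi) = \sum_{n\ge0}\frac{1}{n!}(d\Pi)^{*n}$ (multiplicative convolution exponential) satisfies $dN(u) \le \delta_{1}(u) + 2\,du + (\log u)\,du$ on $[1,\infty)$. -/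
open MeasureTheory

/-- Multiplicative convolution of measures on `[1,∞)`. -/
noncomputable def mconv (μ ν : Measure ℝ) : Measure ℝ :=
  (μ.prod ν).map (fun p : ℝ × ℝ => p.1 * p.2)

/-- Convolution powers with unit `δ₁`. -/
noncomputable def mpow (μ : Measure ℝ) : ℕ → Measure ℝ
  | 0 => Measure.dirac 1
  | n + 1 => mconv (mpow μ n) μ

/-- Convolution exponential `exp^*`. -/
noncomputable def mexp (μ : Measure ℝ) : Measure ℝ :=
  Measure.sum (fun n : ℕ => ((n.factorial : ENNReal))⁻¹ • mpow μ n)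

section Aux
open Set
open scoped ENNReal NNReal
set_option linter.unusedVariables false
set_option linter.unusedSectionVars false


lemma mconv_eq (μ ν : Measure ℝ) : mconv μ ν = μ.mconv ν := rfl

instance (μ ν : Measure ℝ) [SFinite μ] [SFinite ν] : SFinite (mconv μ ν) := by
  rw [mconv_eq]; infer_instance

lemma mcv_lintegral (μ ν : Measure ℝ) [SFinite ν] {f : ℝ → ℝ≥0∞} (hf : Measurable f) :
    ∫⁻ u, f u ∂(mconv μ ν) = ∫⁻ x, ∫⁻ y, f (x * y) ∂ν ∂μ := by
  rw [mconv, lintegral_map hf measurable_mul,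
    lintegral_prod (fun p : ℝ × ℝ => f (p.1 * p.2)) (hf.comp measurable_mul).aemeasurable]

lemma mcv_apply (μ ν : Measure ℝ) [SFinite ν] {s : Set ℝ} (hs : MeasurableSet s) :
    mconv μ ν s = ∫⁻ x, ∫⁻ y, s.indicator 1 (x * y) ∂ν ∂μ := by
  rw [← lintegral_indicator_one hs, mcv_lintegral μ ν (measurable_one.indicator hs)]

lemma mcv_mono {μ μ' ν ν' : Measure ℝ} [SFinite ν] [SFinite ν'] (hμ : μ ≤ μ') (hν : ν ≤ ν') :
    mconv μ ν ≤ mconv μ' ν' := by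
  refine Measure.le_iff.mpr fun s hs => ?_
  rw [mcv_apply μ ν hs, mcv_apply μ' ν' hs]
  exact lintegral_mono' hμ fun x => lintegral_mono' hν le_rfl

lemma mcv_smul_left (c : ℝ≥0∞) (μ ν : Measure ℝ) [SFinite ν] :
    mconv (c • μ) ν = c • mconv μ ν := by
  refine Measure.ext fun s hs => ?_
  rw [mcv_apply _ ν hs, Measure.smul_apply, mcv_apply μ ν hs, lintegral_smul_measure,
    smul_eq_mul]

lemma mcv_add_left (μ₁ μ₂ ν : Measure ℝ) [SFinite ν] :
    mconv (μ₁ + μ₂) ν = mconv μ₁ ν + mconv μ₂ ν := by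
  refine Measure.ext fun s hs => ?_
  rw [mcv_apply _ ν hs, Measure.add_apply, mcv_apply μ₁ ν hs, mcv_apply μ₂ ν hs,
    lintegral_add_measure]

lemma mcv_zero_left (ν : Measure ℝ) : mconv 0 ν = 0 := by
  rw [mconv_eq]; exact Measure.zero_mconv ν

lemma mcv_comm (μ ν : Measure ℝ) [SFinite μ] [SFinite ν] : mconv μ ν = mconv ν μ := by
  rw [mconv_eq, mconv_eq]; exact Measure.mconv_comm μ ν

lemma mcv_dirac_one (μ : Measure ℝ) [SFinite μ] : mconv μ (Measure.dirac 1) = μ := by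
  rw [mconv_eq]; exact Measure.mconv_dirac_one μ

lemma mcv_one_dirac (μ : Measure ℝ) [SFinite μ] : mconv (Measure.dirac 1) μ = μ := by
  rw [mconv_eq]; exact Measure.dirac_one_mconv μ

lemma mcv_rot (a b c : Measure ℝ) [SFinite a] [SFinite b] [SFinite c] :
    mconv (mconv a b) c = mconv (mconv a c) b := by
  have hgc : ∀ s : Set ℝ, MeasurableSet s → Measurable
      (fun w : ℝ => ∫⁻ z, s.indicator 1 (w * z) ∂c) := fun s hs =>
    Measurable.lintegral_prod_right' ((measurable_one.indicator hs).comp measurable_mul)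
  have hgb : ∀ s : Set ℝ, MeasurableSet s → Measurable
      (fun w : ℝ => ∫⁻ z, s.indicator 1 (w * z) ∂b) := fun s hs =>
    Measurable.lintegral_prod_right' ((measurable_one.indicator hs).comp measurable_mul)
  refine Measure.ext fun s hs => ?_
  rw [mcv_apply _ c hs, mcv_apply _ b hs, mcv_lintegral a b (hgc s hs),
    mcv_lintegral a c (hgb s hs)]
  refine lintegral_congr fun x => ?_
  rw [lintegral_lintegral_swap]
  · refine lintegral_congr fun z => lintegral_congr fun y => ?_
    rw [mul_right_comm]
  · exact ((measurable_one.indicator hs).comp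
      ((measurable_const.mul measurable_fst).mul measurable_snd)).aemeasurable


noncomputable def LL : ℝ → ℝ≥0∞ := fun u => ENNReal.ofReal (Real.log u)

lemma LL_meas : Measurable LL := ENNReal.measurable_ofReal.comp Real.measurable_log

noncomputable def LL' : ℝ → ℝ≥0∞ := fun u => (LL u)⁻¹
lemma LL'_meas : Measurable LL' := LL_meas.inv

lemma ae_one_le {μ : Measure ℝ} (h : μ (Iio 1) = 0) : ∀ᵐ x ∂μ, (1:ℝ) ≤ x := by
  rw [ae_iff]
  convert h using 2
  ext x; simp [not_le]

lemma mcv_null_Iic {μ ν : Measure ℝ} [SFinite ν] (hμ : μ (Iio 1) = 0) (hν : ν (Iic 1) = 0) :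
    mconv μ ν (Iic 1) = 0 := by
  rw [mcv_apply μ ν measurableSet_Iic]
  have hν' : ∀ᵐ y ∂ν, (1:ℝ) < y := by
    rw [ae_iff]; convert hν using 2; ext y; simp [not_lt]
  have h1 : Measurable fun x : ℝ => ∫⁻ y, (Iic (1:ℝ)).indicator 1 (x * y) ∂ν := by
    exact Measurable.lintegral_prod_right'
      ((measurable_one.indicator measurableSet_Iic).comp measurable_mul)
  rw [lintegral_eq_zero_iff h1]
  filter_upwards [ae_one_le hμ] with x hx
  simp only [Pi.zero_apply]
  have h2 : Measurable fun y : ℝ => (Iic (1:ℝ)).indicator (1 : ℝ → ℝ≥0∞) (x * y) := by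
    exact Measurable.comp (f := fun y : ℝ => x * y)
      (g := (Iic (1:ℝ)).indicator (1 : ℝ → ℝ≥0∞))
      (measurable_one.indicator measurableSet_Iic) (measurable_const_mul x)
  rw [lintegral_eq_zero_iff h2]
  filter_upwards [hν'] with y hy
  have : ¬ (x * y ≤ 1) := by nlinarith
  simp [indicator_of_notMem, this]

lemma mcv_null_Iio {μ ν : Measure ℝ} [SFinite ν] (hμ : μ (Iio 1) = 0) (hν : ν (Iio 1) = 0) :
    mconv μ ν (Iio 1) = 0 := by
  rw [mcv_apply μ ν measurableSet_Iio]
  have h1 : Measurable fun x : ℝ => ∫⁻ y, (Iio (1:ℝ)).indicator 1 (x * y) ∂ν := by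
    exact Measurable.lintegral_prod_right'
      ((measurable_one.indicator measurableSet_Iio).comp measurable_mul)
  rw [lintegral_eq_zero_iff h1]
  filter_upwards [ae_one_le hμ] with x hx
  simp only [Pi.zero_apply]
  have h2 : Measurable fun y : ℝ => (Iio (1:ℝ)).indicator (1 : ℝ → ℝ≥0∞) (x * y) := by
    exact Measurable.comp (f := fun y : ℝ => x * y)
      (g := (Iio (1:ℝ)).indicator (1 : ℝ → ℝ≥0∞))
      (measurable_one.indicator measurableSet_Iio) (measurable_const_mul x)
  rw [lintegral_eq_zero_iff h2]
  filter_upwards [ae_one_le hν] with y hy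
  have : ¬ (x * y < 1) := by nlinarith
  simp [indicator_of_notMem, this]

lemma ind_one_mul {t : Set ℝ} (f : ℝ → ℝ≥0∞) (y : ℝ) :
    t.indicator f y = t.indicator 1 y * f y := by
  by_cases h : y ∈ t <;> simp [h]

/-- Leibniz rule for the log-density over multiplicative convolution. -/
lemma wdL_mconv (μ ν : Measure ℝ) [SFinite μ] [SFinite ν]
    (hμ : μ (Iio 1) = 0) (hν : ν (Iio 1) = 0) :
    (mconv μ ν).withDensity LL
      = mconv (μ.withDensity LL) ν + mconv μ (ν.withDensity LL) := by
  refine Measure.ext fun s hs => ?_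
  have hind : Measurable (s.indicator (1 : ℝ → ℝ≥0∞)) := measurable_one.indicator hs
  have hinner : Measurable fun x : ℝ => ∫⁻ y, s.indicator 1 (x * y) ∂ν := by
    exact Measurable.lintegral_prod_right' (hind.comp measurable_mul)
  have hinner2 : Measurable fun x : ℝ => ∫⁻ y, LL y * s.indicator 1 (x * y) ∂ν := by
    exact Measurable.lintegral_prod_right'
      ((LL_meas.comp measurable_snd).mul (hind.comp measurable_mul))
  rw [withDensity_apply _ hs, ← lintegral_indicator hs,
    mcv_lintegral _ _ (LL_meas.indicator hs), Measure.add_apply,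
    mcv_apply _ ν hs, mcv_apply μ _ hs,
    lintegral_withDensity_eq_lintegral_mul μ LL_meas hinner]
  have step2 : ∀ x : ℝ, (∫⁻ y, s.indicator 1 (x * y) ∂ν.withDensity LL)
      = ∫⁻ y, LL y * s.indicator 1 (x * y) ∂ν := fun x =>
    lintegral_withDensity_eq_lintegral_mul ν LL_meas (by
      exact Measurable.comp (f := fun y : ℝ => x * y) (g := s.indicator (1 : ℝ → ℝ≥0∞))
        hind (measurable_const_mul x))
  simp only [step2, Pi.mul_apply]
  rw [← lintegral_add_left (f := fun a => LL a * ∫⁻ y, s.indicator 1 (a * y) ∂ν) (LL_meas.mul hinner)]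
  refine lintegral_congr_ae ?_
  filter_upwards [ae_one_le hμ] with x hx
  have hind2 : Measurable fun y : ℝ => s.indicator (1 : ℝ → ℝ≥0∞) (x * y) := by
    exact Measurable.comp (f := fun y : ℝ => x * y) (g := s.indicator (1 : ℝ → ℝ≥0∞))
      hind (measurable_const_mul x)
  rw [← lintegral_const_mul _ hind2,
    ← lintegral_add_left (f := fun a => LL x * s.indicator 1 (x * a)) (measurable_const.mul hind2)]
  refine lintegral_congr_ae ?_
  filter_upwards [ae_one_le hν] with y hy
  have hxpos : (0:ℝ) < x := lt_of_lt_of_le zero_lt_one hx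
  have hypos : (0:ℝ) < y := lt_of_lt_of_le zero_lt_one hy
  have hL : LL (x * y) = LL x + LL y := by
    unfold LL
    rw [Real.log_mul hxpos.ne' hypos.ne',
      ENNReal.ofReal_add (Real.log_nonneg hx) (Real.log_nonneg hy)]
  rw [ind_one_mul LL (x*y), hL]
  ring


section
variable (P : Measure ℝ) [SFinite P]

instance mpow_sfinite (n : ℕ) : SFinite (mpow P n) := by
  induction n with
  | zero => exact inferInstanceAs (SFinite (Measure.dirac 1))
  | succ n ih => exact inferInstanceAs (SFinite (mconv (mpow P n) P))

lemma dirac_wdL : (Measure.dirac (1:ℝ)).withDensity LL = 0 := by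
  refine Measure.ext fun s hs => ?_
  rw [withDensity_apply _ hs, ← lintegral_indicator hs, lintegral_dirac]
  have : LL 1 = 0 := by simp [LL]
  by_cases h : (1:ℝ) ∈ s <;> simp [h, this]

variable {P}
variable (hIic : P (Iic 1) = 0)
include hIic

lemma P_Iio : P (Iio 1) = 0 :=
  le_antisymm (le_trans (measure_mono Iio_subset_Iic_self) hIic.le) (zero_le)

lemma mpow_succ_Iic (n : ℕ) : mpow P (n+1) (Iic 1) = 0 := by
  induction n with
  | zero =>
    show mconv (mpow P 0) P (Iic 1) = 0
    rw [show mpow P 0 = Measure.dirac 1 from rfl, mcv_one_dirac]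
    exact hIic
  | succ n ih =>
    show mconv (mpow P (n+1)) P (Iic 1) = 0
    exact mcv_null_Iic
      (le_antisymm (le_trans (measure_mono Iio_subset_Iic_self) ih.le) (zero_le)) hIic

lemma mpow_Iio (n : ℕ) : mpow P n (Iio 1) = 0 := by
  cases n with
  | zero => show Measure.dirac (1:ℝ) (Iio 1) = 0; simp
  | succ n =>
    exact le_antisymm
      (le_trans (measure_mono Iio_subset_Iic_self) (mpow_succ_Iic hIic n).le) (zero_le)

/-- Key derivation identity for powers. -/
lemma wdL_mpow (n : ℕ) :
    (mpow P (n+1)).withDensity LL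
      = ((n+1 : ℕ) : ℝ≥0∞) • mconv (mpow P n) (P.withDensity LL) := by
  induction n with
  | zero =>
    show (mconv (mpow P 0) P).withDensity LL = _
    rw [show mpow P 0 = Measure.dirac 1 from rfl,
      wdL_mconv _ _ (by simp) (P_Iio hIic), dirac_wdL]
    have : mconv (0 : Measure ℝ) P = 0 := by
      refine Measure.ext fun s hs => ?_
      simp [mconv]
    rw [this, mcv_one_dirac]
    simp
  | succ n ih =>
    show (mconv (mpow P (n+1)) P).withDensity LL = _
    rw [wdL_mconv _ _ (mpow_Iio hIic (n+1)) (P_Iio hIic), ih, mcv_smul_left,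
      mcv_rot (mpow P n) (P.withDensity LL) P,
      show mconv (mpow P n) P = mpow P (n+1) from rfl]
    have : ((n+1:ℕ) : ℝ≥0∞) • mconv (mpow P (n+1)) (P.withDensity LL)
        + mconv (mpow P (n+1)) (P.withDensity LL)
        = ((n+1+1:ℕ) : ℝ≥0∞) • mconv (mpow P (n+1)) (P.withDensity LL) := by
      rw [← one_smul ℝ≥0∞ (mconv (mpow P (n+1)) (P.withDensity LL))]
      rw [smul_smul, ← add_smul]
      norm_num
    rw [this]
end


noncomputable def m0 : Measure ℝ := volume.restrict (Set.Ici (1:ℝ))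
noncomputable def RR : Measure ℝ :=
  Measure.dirac 1 + m0.withDensity (fun u => ENNReal.ofReal (2 + Real.log u))
noncomputable def QQ : Measure ℝ :=
  m0.withDensity (fun u => ENNReal.ofReal (2 * (1 - u⁻¹)))
noncomputable def WW : Measure ℝ :=
  m0.withDensity (fun u => ENNReal.ofReal (Real.log u * (2 + Real.log u)))
instance : SFinite m0 := inferInstanceAs (SFinite (volume.restrict (Ici 1)))
instance : SFinite QQ :=
  inferInstanceAs (SFinite (m0.withDensity (fun u => ENNReal.ofReal (2 * (1 - u⁻¹)))))
instance : SFinite RR :=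
  inferInstanceAs (SFinite (Measure.dirac 1
    + m0.withDensity (fun u => ENNReal.ofReal (2 + Real.log u))))

noncomputable def dLi2 : Measure ℝ :=
  (2 : ℝ≥0∞) • (m0.withDensity (fun u => ENNReal.ofReal ((1 - u⁻¹) / Real.log u)))



/-- integrand of the convolution integral -/
noncomputable def phi (u x : ℝ) : ℝ := 2*(1-x⁻¹) * (x⁻¹ * ((2 + Real.log u) - Real.log x))

lemma hasDeriv_F (u : ℝ) {x : ℝ} (hx : 0 < x) :
    HasDerivAt (fun x => -((2 + Real.log u) - Real.log x)^2
      + (2 * x⁻¹) * (((2 + Real.log u) - Real.log x) - 1))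
      (phi u x) x := by
  set a := 2 + Real.log u with ha
  have hlog : HasDerivAt Real.log x⁻¹ x := Real.hasDerivAt_log hx.ne'
  have h1 : HasDerivAt (fun x : ℝ => a - Real.log x) (-x⁻¹) x := hlog.const_sub a
  have h2 : HasDerivAt (fun x : ℝ => -((a - Real.log x)^2))
      (-((2:ℕ) * (a - Real.log x)^1 * (-x⁻¹))) x := (h1.pow 2).neg
  have h3 : HasDerivAt (fun x : ℝ => 2 * x⁻¹) (2 * (-(x^2)⁻¹)) x :=
    (hasDerivAt_inv hx.ne').const_mul 2
  have h4 : HasDerivAt (fun x : ℝ => (a - Real.log x) - 1) (-x⁻¹) x := h1.sub_const 1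
  have h5 := h3.mul h4
  have h6 := h2.add h5
  refine h6.congr_deriv ?_
  rw [phi, ← ha]
  field_simp
  ring

lemma integral_phi {u : ℝ} (hu : 1 < u) :
    ∫ x in (1:ℝ)..u, phi u x
      = Real.log u * (2 + Real.log u) - 2*(1 - u⁻¹) := by
  have h01 : ∀ x ∈ uIcc (1:ℝ) u, 0 < x := by
    rw [uIcc_of_le hu.le]
    intro x hx; linarith [hx.1]
  have hcont : ContinuousOn (phi u) (uIcc (1:ℝ) u) := by
    apply ContinuousOn.mul
    · exact continuousOn_const.mul (continuousOn_const.sub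
        (continuousOn_inv₀.mono fun x hx => (h01 x hx).ne'))
    · exact (continuousOn_inv₀.mono fun x hx => (h01 x hx).ne').mul
        (continuousOn_const.sub (Real.continuousOn_log.mono fun x hx => (h01 x hx).ne'))
  rw [intervalIntegral.integral_eq_sub_of_hasDerivAt
    (fun x hx => hasDeriv_F u (h01 x hx)) (hcont.intervalIntegrable)]
  simp only [Real.log_one]
  ring

lemma key_integral {u : ℝ} (hu : 1 < u) :
    ∫⁻ x, (Icc 1 u).indicator (fun x => ENNReal.ofReal (phi u x)) x ∂volume
      = ENNReal.ofReal (Real.log u * (2 + Real.log u) - 2*(1 - u⁻¹)) := by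
  rw [lintegral_indicator measurableSet_Icc]
  have hcont : ContinuousOn (phi u) (Icc (1:ℝ) u) := by
    have h01 : ∀ x ∈ Icc (1:ℝ) u, x ≠ 0 := fun x hx => by
      have := hx.1; positivity
    apply ContinuousOn.mul
    · exact continuousOn_const.mul (continuousOn_const.sub (continuousOn_inv₀.mono h01))
    · exact (continuousOn_inv₀.mono h01).mul
        (continuousOn_const.sub (Real.continuousOn_log.mono h01))
  have hint : IntegrableOn (phi u) (Icc (1:ℝ) u) volume := hcont.integrableOn_Icc
  have hnn : 0 ≤ᵐ[volume.restrict (Icc (1:ℝ) u)] phi u := by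
    refine ae_restrict_of_forall_mem measurableSet_Icc fun x hx => ?_
    have hx1 : (1:ℝ) ≤ x := hx.1
    have hx0 : (0:ℝ) < x := lt_of_lt_of_le zero_lt_one hx1
    have hinv : x⁻¹ ≤ 1 := by rw [inv_le_one_iff₀]; right; exact hx1
    have hlog : Real.log x ≤ Real.log u := Real.log_le_log hx0 hx.2
    have : (0:ℝ) ≤ (2 + Real.log u) - Real.log x := by
      have := Real.log_nonneg hx1
      linarith
    have h2 : (0:ℝ) ≤ x⁻¹ := by positivity
    rw [phi]
    have h3 : (0:ℝ) ≤ 2*(1-x⁻¹) := by linarith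
    positivity
  rw [← ofReal_integral_eq_lintegral_ofReal hint hnn]
  congr 1
  rw [MeasureTheory.integral_Icc_eq_integral_Ioc,
    ← intervalIntegral.integral_of_le hu.le]
  exact integral_phi hu


noncomputable def g2 : ℝ → ℝ≥0∞ := fun y => ENNReal.ofReal (2 + Real.log y)
lemma g2_meas : Measurable g2 :=
  ENNReal.measurable_ofReal.comp (measurable_const.add Real.measurable_log)

lemma lintegral_cv {x : ℝ} (hx : 0 < x) {G : ℝ → ℝ≥0∞} (hG : Measurable G) :
    ∫⁻ y, G (x * y) ∂volume = ENNReal.ofReal x⁻¹ * ∫⁻ u, G u ∂volume := by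
  rw [← lintegral_map hG (measurable_const_mul x), Real.map_volume_mul_left hx.ne',
    lintegral_smul_measure, abs_inv, abs_of_pos hx, smul_eq_mul]

lemma inner_cv {s : Set ℝ} (hs : MeasurableSet s) {x : ℝ} (hx : 1 ≤ x) :
    ∫⁻ y, s.indicator 1 (x*y) ∂(m0.withDensity g2)
      = ENNReal.ofReal x⁻¹
          * ∫⁻ u, (Ici 1).indicator 1 (u*x⁻¹) * (g2 (u*x⁻¹) * s.indicator 1 u) ∂volume := by
  have hx0 : (0:ℝ) < x := lt_of_lt_of_le zero_lt_one hx
  have hind : Measurable fun y : ℝ => s.indicator (1 : ℝ → ℝ≥0∞) (x * y) := by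
    exact Measurable.comp (f := fun y : ℝ => x * y) (g := s.indicator (1 : ℝ → ℝ≥0∞))
      (measurable_one.indicator hs) (measurable_const_mul x)
  rw [lintegral_withDensity_eq_lintegral_mul m0 g2_meas hind]
  rw [show m0 = volume.restrict (Ici 1) from rfl, ← lintegral_indicator measurableSet_Ici]
  have hG : Measurable fun u : ℝ =>
      (Ici 1).indicator 1 (u*x⁻¹) * (g2 (u*x⁻¹) * s.indicator 1 u) := by
    refine Measurable.mul ?_ (Measurable.mul ?_ ?_)
    · exact Measurable.comp (f := fun u : ℝ => u * x⁻¹)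
        (g := (Ici 1).indicator (1 : ℝ → ℝ≥0∞))
        (measurable_one.indicator measurableSet_Ici) (measurable_mul_const x⁻¹)
    · exact g2_meas.comp (measurable_mul_const x⁻¹)
    · exact measurable_one.indicator hs
  rw [← lintegral_cv hx0 hG]
  refine lintegral_congr fun y => ?_
  have hxy : x * y * x⁻¹ = y := by field_simp
  rw [hxy]
  by_cases hy : y ∈ Ici (1:ℝ)
  · rw [indicator_of_mem hy, indicator_of_mem hy]
    simp
  · rw [indicator_of_notMem hy, indicator_of_notMem hy]
    simp

noncomputable def KK (s : Set ℝ) (x u : ℝ) : ℝ≥0∞ :=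
  (Ici 1).indicator 1 x * (ENNReal.ofReal (2*(1-x⁻¹)) * (ENNReal.ofReal x⁻¹ *
    ((Ici 1).indicator 1 (u*x⁻¹) * (g2 (u*x⁻¹) * s.indicator 1 u))))

lemma KK_meas {s : Set ℝ} (hs : MeasurableSet s) :
    Measurable (fun p : ℝ × ℝ => KK s p.1 p.2) := by
  refine Measurable.mul ?_ (Measurable.mul ?_ (Measurable.mul ?_ (Measurable.mul ?_
    (Measurable.mul ?_ ?_))))
  · exact Measurable.comp (g := (Ici 1).indicator (1 : ℝ → ℝ≥0∞))
      (measurable_one.indicator measurableSet_Ici) measurable_fst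
  · exact ENNReal.measurable_ofReal.comp
      ((measurable_const.sub measurable_fst.inv).const_mul 2)
  · exact ENNReal.measurable_ofReal.comp measurable_fst.inv
  · exact Measurable.comp (g := (Ici 1).indicator (1 : ℝ → ℝ≥0∞))
      (measurable_one.indicator measurableSet_Ici) (measurable_snd.mul measurable_fst.inv)
  · exact g2_meas.comp (measurable_snd.mul measurable_fst.inv)
  · exact Measurable.comp (g := s.indicator (1 : ℝ → ℝ≥0∞))
      (measurable_one.indicator hs) measurable_snd

noncomputable def k0 : ℝ → ℝ≥0∞ :=
  fun u => ENNReal.ofReal (Real.log u * (2 + Real.log u) - 2*(1 - u⁻¹))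

lemma pointwise_bound {s : Set ℝ} (hs : MeasurableSet s) {u : ℝ} (hu : u ≠ 1) :
    ∫⁻ x, KK s x u ∂volume ≤ (s ∩ Ici 1).indicator k0 u := by
  by_cases hus : u ∈ s
  swap
  · have hKz : ∀ x, KK s x u = 0 := fun x => by
      simp [KK, indicator_of_notMem hus]
    simp only [hKz, lintegral_zero]
    exact zero_le
  by_cases hu1 : 1 ≤ u
  · have huu : 1 < u := lt_of_le_of_ne hu1 (Ne.symm hu)
    have hmem : u ∈ s ∩ Ici 1 := ⟨hus, hu1⟩
    rw [indicator_of_mem hmem]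
    refine le_trans (lintegral_mono fun x => ?_) (key_integral huu).le
    · -- KK s x u ≤ (Icc 1 u).indicator (fun x => ofReal (phi u x)) x
      by_cases hx1 : (1:ℝ) ≤ x
      swap
      · have hxmem : x ∉ Ici (1:ℝ) := fun h => hx1 h
        simp only [KK, indicator_of_notMem hxmem, zero_mul]
        exact zero_le
      have hx0 : (0:ℝ) < x := lt_of_lt_of_le zero_lt_one hx1
      by_cases hxu : x ≤ u
      · have hmem2 : u * x⁻¹ ∈ Ici (1:ℝ) := by
          rw [mem_Ici, ← div_eq_mul_inv, le_div_iff₀ hx0, one_mul]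
          exact hxu
        have hxIcc : x ∈ Icc (1:ℝ) u := ⟨hx1, hxu⟩
        rw [indicator_of_mem hxIcc]
        simp only [KK]
        rw [indicator_of_mem (mem_Ici.mpr hx1), indicator_of_mem hmem2,
          indicator_of_mem hus]
        simp only [Pi.one_apply, one_mul, mul_one]
        have hlog : Real.log (u * x⁻¹) = Real.log u - Real.log x := by
          rw [← div_eq_mul_inv, Real.log_div (by positivity) hx0.ne']
        have hinv : x⁻¹ ≤ 1 := by rw [inv_le_one_iff₀]; right; exact hx1
        have h1 : (0:ℝ) ≤ 2*(1-x⁻¹) := by linarith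
        have h2 : (0:ℝ) ≤ x⁻¹ := by positivity
        rw [g2, hlog, phi, ENNReal.ofReal_mul h1, ENNReal.ofReal_mul h2]
        have : 2 + (Real.log u - Real.log x) = 2 + Real.log u - Real.log x := by ring
        rw [this]
      · have : u * x⁻¹ ∉ Ici (1:ℝ) := by
          rw [mem_Ici, ← div_eq_mul_inv, not_le, div_lt_one hx0]
          exact lt_of_not_ge hxu
        simp only [KK, indicator_of_notMem this, zero_mul, mul_zero]
        exact zero_le
  · have hKz : ∀ x, KK s x u = 0 := fun x => by
      by_cases hx1 : (1:ℝ) ≤ x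
      · have hx0 : (0:ℝ) < x := lt_of_lt_of_le zero_lt_one hx1
        have h5 : u * x⁻¹ ∉ Ici (1:ℝ) := by
          rw [mem_Ici, ← div_eq_mul_inv, not_le, div_lt_one hx0]
          linarith [lt_of_not_ge hu1]
        simp only [KK, indicator_of_notMem h5, zero_mul, mul_zero]
      · have hxmem : x ∉ Ici (1:ℝ) := fun h => hx1 h
        simp only [KK, indicator_of_notMem hxmem, zero_mul]
    simp only [hKz, lintegral_zero]
    exact zero_le

lemma conv_QQ_rho :
    mconv QQ (m0.withDensity g2) ≤ m0.withDensity k0 := by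
  refine Measure.le_iff.mpr fun s hs => ?_
  rw [mcv_apply _ _ hs]
  have hq : Measurable (fun u : ℝ => ENNReal.ofReal (2 * (1 - u⁻¹))) := by
    exact ENNReal.measurable_ofReal.comp ((measurable_const.sub measurable_inv).const_mul 2)
  have hinner : Measurable fun x : ℝ => ∫⁻ y, s.indicator 1 (x * y) ∂(m0.withDensity g2) := by
    exact Measurable.lintegral_prod_right'
      ((measurable_one.indicator hs).comp measurable_mul)
  rw [show QQ = m0.withDensity (fun u => ENNReal.ofReal (2 * (1 - u⁻¹))) from rfl,
    lintegral_withDensity_eq_lintegral_mul m0 hq hinner]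
  have hGx : ∀ x : ℝ, Measurable fun u : ℝ =>
      (Ici 1).indicator 1 (u*x⁻¹) * (g2 (u*x⁻¹) * s.indicator 1 u) := by
    intro x
    refine Measurable.mul ?_ (Measurable.mul ?_ ?_)
    · exact Measurable.comp (f := fun u : ℝ => u * x⁻¹)
        (g := (Ici 1).indicator (1 : ℝ → ℝ≥0∞))
        (measurable_one.indicator measurableSet_Ici) (measurable_mul_const x⁻¹)
    · exact g2_meas.comp (measurable_mul_const x⁻¹)
    · exact measurable_one.indicator hs
  have stepA : ∫⁻ x, ((fun u => ENNReal.ofReal (2 * (1 - u⁻¹)))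
        * fun x => ∫⁻ y, s.indicator 1 (x * y) ∂(m0.withDensity g2)) x ∂m0
      = ∫⁻ x, ∫⁻ u, KK s x u ∂volume ∂m0 := by
    refine lintegral_congr_ae ?_
    filter_upwards [ae_restrict_mem (measurableSet_Ici (a := (1:ℝ)))] with x hx
    simp only [Pi.mul_apply]
    rw [inner_cv hs hx, ← lintegral_const_mul _ (hGx x),
      ← lintegral_const_mul _ ((hGx x).const_mul _)]
    refine lintegral_congr fun u => ?_
    simp only [KK]
    rw [indicator_of_mem hx]
    simp only [Pi.one_apply, one_mul]
  rw [stepA]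
  have hKmeas : ∀ x, Measurable fun u => KK s x u := fun x => by
    exact (KK_meas hs).comp measurable_prodMk_left
  have stepB : ∫⁻ x, ∫⁻ u, KK s x u ∂volume ∂m0
      = ∫⁻ x, ∫⁻ u, KK s x u ∂volume ∂volume := by
    rw [show m0 = volume.restrict (Ici 1) from rfl, ← lintegral_indicator measurableSet_Ici]
    refine lintegral_congr fun x => ?_
    rw [ind_one_mul (fun x => ∫⁻ u, KK s x u ∂volume) x, ← lintegral_const_mul _ (hKmeas x)]
    by_cases hx : x ∈ Ici (1:ℝ)
    · refine lintegral_congr fun u => ?_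
      rw [indicator_of_mem hx]
      simp
    · refine lintegral_congr fun u => ?_
      rw [indicator_of_notMem hx]
      simp only [KK, indicator_of_notMem hx, zero_mul]
  rw [stepB]
  rw [lintegral_lintegral_swap (KK_meas hs).aemeasurable]
  have hRHS : (m0.withDensity k0) s = ∫⁻ u, (s ∩ Ici 1).indicator k0 u ∂volume := by
    rw [withDensity_apply _ hs, show m0 = volume.restrict (Ici 1) from rfl,
      Measure.restrict_restrict hs, ← lintegral_indicator (hs.inter measurableSet_Ici)]
  rw [hRHS]
  refine lintegral_mono_ae ?_
  have h1 : ∀ᵐ u : ℝ ∂volume, u ≠ 1 := by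
    rw [ae_iff]
    have he : {u : ℝ | ¬ u ≠ 1} = {(1:ℝ)} := by ext u; simp
    rw [he]
    exact Real.volume_singleton
  filter_upwards [h1] with u hu
  exact pointwise_bound hs hu

lemma mcv_add_right (μ ν₁ ν₂ : Measure ℝ) [SFinite ν₁] [SFinite ν₂] :
    mconv μ (ν₁ + ν₂) = mconv μ ν₁ + mconv μ ν₂ := by
  refine Measure.ext fun s hs => ?_
  rw [mcv_apply _ _ hs, Measure.add_apply, mcv_apply _ ν₁ hs, mcv_apply _ ν₂ hs]
  have h1 : Measurable fun x : ℝ => ∫⁻ y, s.indicator 1 (x * y) ∂ν₁ := by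
    exact Measurable.lintegral_prod_right' ((measurable_one.indicator hs).comp measurable_mul)
  rw [← lintegral_add_left h1]
  refine lintegral_congr fun x => ?_
  rw [lintegral_add_measure]

lemma conv_bound : mconv QQ RR ≤ WW := by
  rw [show RR = Measure.dirac 1 + m0.withDensity g2 from rfl, mcv_add_right, mcv_dirac_one]
  refine le_trans (add_le_add le_rfl conv_QQ_rho) ?_
  rw [show QQ = m0.withDensity (fun u => ENNReal.ofReal (2 * (1 - u⁻¹))) from rfl]
  have hk0 : Measurable k0 := by
    exact ENNReal.measurable_ofReal.comp
      ((Real.measurable_log.mul (measurable_const.add Real.measurable_log)).sub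
        ((measurable_const.sub measurable_inv).const_mul 2))
  rw [← withDensity_add_right _ hk0]
  rw [show WW = m0.withDensity (fun u => ENNReal.ofReal (Real.log u * (2 + Real.log u)))
    from rfl]
  refine le_of_eq (withDensity_congr_ae ?_)
  refine ae_restrict_of_forall_mem measurableSet_Ici fun u hu => ?_
  have hu1 : (1:ℝ) ≤ u := hu
  have hu0 : (0:ℝ) < u := lt_of_lt_of_le zero_lt_one hu1
  have hinv : u⁻¹ ≤ 1 := by rw [inv_le_one_iff₀]; right; exact hu1
  have hlog : 0 ≤ Real.log u := Real.log_nonneg hu1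
  have hineq : 2*(1 - u⁻¹) ≤ Real.log u * (2 + Real.log u) := by
    have h1 : 1 - u⁻¹ ≤ Real.log u := by
      have := Real.log_le_sub_one_of_pos (inv_pos.mpr hu0)
      rw [Real.log_inv] at this
      linarith
    nlinarith
  simp only [Pi.add_apply, k0]
  rw [← ENNReal.ofReal_add (by linarith) (by linarith)]
  congr 1
  ring


lemma wd_mono_measure {μ ν : Measure ℝ} (h : μ ≤ ν) (f : ℝ → ℝ≥0∞) :
    μ.withDensity f ≤ ν.withDensity f := by
  refine Measure.le_iff.mpr fun s hs => ?_
  rw [withDensity_apply _ hs, withDensity_apply _ hs]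
  exact lintegral_mono' (Measure.restrict_mono (le_refl s) h) le_rfl

/-- Undo the log-density for measures supported in `(1,∞)`. -/
lemma wd_recover {μ : Measure ℝ} (hμ : μ (Iic 1) = 0) :
    (μ.withDensity LL).withDensity LL' = μ := by
  rw [← withDensity_mul _ LL_meas LL'_meas]
  have hae : (LL * LL') =ᵐ[μ] 1 := by
    rw [Filter.EventuallyEq, ae_iff]
    refine measure_mono_null (fun u hu => ?_) hμ
    simp only [mem_setOf_eq, Pi.mul_apply, Pi.one_apply] at hu
    by_contra hle
    simp only [mem_Iic, not_le] at hle
    have h1 : LL u ≠ 0 := by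
      simp only [LL, ne_eq, ENNReal.ofReal_eq_zero, not_le]
      exact Real.log_pos hle
    have h2 : LL u ≠ ⊤ := by simp [LL]
    exact hu (ENNReal.mul_inv_cancel h1 h2)
  rw [withDensity_congr_ae hae, withDensity_one]

section main
variable {P : Measure ℝ} [SFinite P] (hIic : P (Iic 1) = 0)

noncomputable def SS (P : Measure ℝ) (N : ℕ) : Measure ℝ :=
  ∑ n ∈ Finset.range N, ((n.factorial : ℝ≥0∞))⁻¹ • mpow P n

include hIic in
lemma term_eq (n : ℕ) :
    (((n+1).factorial : ℝ≥0∞))⁻¹ • mpow P (n+1)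
      = ((n.factorial : ℝ≥0∞))⁻¹
          • (mconv (mpow P n) (P.withDensity LL)).withDensity LL' := by
  conv_lhs => rw [← wd_recover (mpow_succ_Iic hIic n), wdL_mpow hIic n,
    withDensity_smul_measure, smul_smul]
  congr 1
  have key : ∀ (a b : ℝ≥0∞), a ≠ 0 → a ≠ ⊤ → b ≠ 0 → (a*b)⁻¹ * a = b⁻¹ := by
    intro a b ha0 hat hb0
    rw [ENNReal.mul_inv (Or.inl ha0) (Or.inr hb0), mul_comm a⁻¹ b⁻¹, mul_assoc,
      ENNReal.inv_mul_cancel ha0 hat, mul_one]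
  rw [Nat.factorial_succ, Nat.cast_mul]
  exact key _ _ (Nat.cast_ne_zero.mpr (Nat.succ_ne_zero n)) (ENNReal.natCast_ne_top _)
    (Nat.cast_ne_zero.mpr n.factorial_ne_zero)

lemma wd_sum {ι : Type*} (s : Finset ι) (μ : ι → Measure ℝ) (f : ℝ → ℝ≥0∞) :
    (∑ i ∈ s, μ i).withDensity f = ∑ i ∈ s, (μ i).withDensity f := by
  classical
  induction s using Finset.induction with
  | empty => simp [withDensity_zero]
  | insert _ _ h ih => rw [Finset.sum_insert h, Finset.sum_insert h, withDensity_add_measure, ih]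

lemma mcv_sum_left {ι : Type*} (s : Finset ι) (μ : ι → Measure ℝ) (ν : Measure ℝ) [SFinite ν] :
    mconv (∑ i ∈ s, μ i) ν = ∑ i ∈ s, mconv (μ i) ν := by
  classical
  induction s using Finset.induction with
  | empty => simp [mcv_zero_left]
  | insert _ _ h ih => rw [Finset.sum_insert h, Finset.sum_insert h, mcv_add_left, ih]

include hIic in
lemma SS_succ (N : ℕ) :
    SS P (N+1) = Measure.dirac 1 + (mconv (SS P N) (P.withDensity LL)).withDensity LL' := by
  rw [SS, Finset.sum_range_succ']
  have h0 : ((Nat.factorial 0 : ℝ≥0∞))⁻¹ • mpow P 0 = Measure.dirac 1 := by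
    simp [mpow]
  rw [h0]
  rw [add_comm]
  congr 1
  have : ∀ i, (((i+1).factorial : ℝ≥0∞))⁻¹ • mpow P (i+1)
      = ((i.factorial : ℝ≥0∞))⁻¹
          • (mconv (mpow P i) (P.withDensity LL)).withDensity LL' := term_eq hIic
  rw [Finset.sum_congr rfl (fun i _ => this i), SS, mcv_sum_left]
  rw [wd_sum]
  refine Finset.sum_congr rfl fun i _ => ?_
  rw [mcv_smul_left, withDensity_smul_measure]



end main

lemma wd_mono_ae {μ : Measure ℝ} {f g : ℝ → ℝ≥0∞} (h : f ≤ᵐ[μ] g) :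
    μ.withDensity f ≤ μ.withDensity g := by
  refine Measure.le_iff.mpr fun s hs => ?_
  rw [withDensity_apply _ hs, withDensity_apply _ hs]
  exact lintegral_mono_ae (ae_restrict_of_ae h)

lemma m0_singleton : m0 {(1:ℝ)} = 0 := by
  rw [m0, Measure.restrict_apply (measurableSet_singleton 1)]
  exact le_antisymm (le_trans (measure_mono (inter_subset_left)) (by simp)) (zero_le)

section main
variable {P : Measure ℝ} (hsupp : P (Iio 1) = 0) (hP : P ≤ dLi2)

include hP in
lemma P_singleton : P {1} = 0 := by
  have h2 : dLi2 {1} = 0 := by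
    rw [dLi2, Measure.smul_apply, withDensity_apply _ (measurableSet_singleton 1),
      Measure.restrict_eq_zero.mpr m0_singleton]
    simp
  exact le_antisymm (le_trans (Measure.le_iff'.mp hP {1}) h2.le) (zero_le)

include hsupp hP in
lemma P_Iic : P (Iic 1) = 0 := by
  have : Iic (1:ℝ) = Iio 1 ∪ {1} := by
    ext x; simp [le_iff_lt_or_eq]
  rw [this]
  exact le_antisymm (le_trans (measure_union_le _ _)
    (by rw [hsupp, P_singleton hP]; simp)) (zero_le)

include hP in
lemma sf_P : SigmaFinite P := by
  have hli : ∀ᵐ u ∂m0, ENNReal.ofReal ((1 - u⁻¹) / Real.log u) ≤ 1 := by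
    refine ae_restrict_of_forall_mem measurableSet_Ici fun u hu => ?_
    rcases eq_or_lt_of_le (mem_Ici.mp hu) with h | h
    · simp [← h]
    · have hlog := Real.log_pos h
      have hup : (0:ℝ) < u := lt_trans zero_lt_one h
      have : (1 - u⁻¹) / Real.log u ≤ 1 := by
        rw [div_le_one hlog]
        have := Real.log_le_sub_one_of_pos (inv_pos.mpr hup)
        rw [Real.log_inv] at this
        linarith
      calc ENNReal.ofReal ((1 - u⁻¹) / Real.log u) ≤ ENNReal.ofReal 1 :=
            ENNReal.ofReal_le_ofReal this
        _ = 1 := ENNReal.ofReal_one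
  have h1 : dLi2 ≤ (2 : ℝ≥0∞) • m0 := by
    refine Measure.le_iff'.mpr fun s => ?_
    rw [dLi2, Measure.smul_apply, Measure.smul_apply, smul_eq_mul, smul_eq_mul]
    refine mul_le_mul_right ?_ 2
    have h := wd_mono_ae (μ := m0) (f := fun u => ENNReal.ofReal ((1 - u⁻¹) / Real.log u))
      (g := (1 : ℝ → ℝ≥0∞)) hli
    rw [withDensity_one] at h
    exact Measure.le_iff'.mp h s
  have h2 : P ≤ (2 : ℝ≥0) • m0 := by
    have : ((2:ℝ≥0) : ℝ≥0∞) • m0 = (2 : ℝ≥0∞) • m0 := by rw [ENNReal.coe_ofNat]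
    rw [show (2 : ℝ≥0) • m0 = ((2:ℝ≥0) : ℝ≥0∞) • m0 from rfl, this]
    exact le_trans hP h1
  have : SigmaFinite ((2 : ℝ≥0) • m0) := by
    rw [m0]; infer_instance
  exact Measure.sigmaFinite_of_le _ h2

include hP in
lemma hPL : P.withDensity LL ≤ QQ := by
  refine le_trans (wd_mono_measure hP LL) (le_of_eq ?_)
  have hf : Measurable (fun u : ℝ => ENNReal.ofReal ((1 - u⁻¹) / Real.log u)) := by
    exact ENNReal.measurable_ofReal.comp
      ((measurable_const.sub measurable_inv).div Real.measurable_log)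
  rw [dLi2, withDensity_smul_measure, ← withDensity_mul _ hf LL_meas]
  rw [← withDensity_smul' 2 _ (by norm_num)]
  rw [QQ]
  refine withDensity_congr_ae ?_
  refine ae_restrict_of_forall_mem measurableSet_Ici fun u hu => ?_
  rcases eq_or_lt_of_le (mem_Ici.mp hu) with h | h
  · simp [← h, LL, Pi.smul_apply]
  · have hlog := Real.log_pos h
    have hup : (0:ℝ) < u := lt_trans zero_lt_one h
    have hinv : u⁻¹ ≤ 1 := by
      rw [inv_le_one_iff₀]; right; exact hu
    simp only [Pi.smul_apply, Pi.mul_apply, smul_eq_mul, LL]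
    rw [← ENNReal.ofReal_mul (div_nonneg (by linarith) hlog.le),
      div_mul_cancel₀ _ hlog.ne']
    rw [show (2:ℝ≥0∞) = ENNReal.ofReal 2 by norm_num,
      ← ENNReal.ofReal_mul (by norm_num)]

lemma WW_LL' : WW.withDensity LL' ≤ m0.withDensity (fun u => ENNReal.ofReal (2 + Real.log u)) := by
  have hw : Measurable (fun u : ℝ => ENNReal.ofReal (Real.log u * (2 + Real.log u))) := by
    exact ENNReal.measurable_ofReal.comp
      (Real.measurable_log.mul (measurable_const.add Real.measurable_log))
  rw [WW, ← withDensity_mul _ hw LL'_meas]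
  refine le_of_eq (withDensity_congr_ae ?_)
  have h1 : ∀ᵐ u ∂m0, u ≠ 1 := by
    rw [ae_iff]
    refine le_antisymm (le_trans (measure_mono fun u hu => ?_) m0_singleton.le) (zero_le)
    simpa using hu
  have h2 : ∀ᵐ u ∂m0, (1:ℝ) ≤ u := ae_restrict_of_forall_mem measurableSet_Ici fun u hu => hu
  filter_upwards [h1, h2] with u hne hu
  have h : (1:ℝ) < u := lt_of_le_of_ne hu (Ne.symm hne)
  have hlog := Real.log_pos h
  simp only [Pi.mul_apply, LL', LL]
  rw [ENNReal.ofReal_mul hlog.le, mul_comm (ENNReal.ofReal (Real.log u)), mul_assoc,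
    ENNReal.mul_inv_cancel (by simpa using hlog) ENNReal.ofReal_ne_top, mul_one]

include hsupp hP in
lemma SS_le : ∀ N, SS P N ≤ RR := by
  have : SigmaFinite P := sf_P hP
  intro N
  induction N with
  | zero =>
    have h0 : SS P 0 = 0 := by simp [SS]
    rw [h0]
    exact Measure.zero_le RR
  | succ N ih =>
    rw [SS_succ (P_Iic hsupp hP) N, RR]
    refine add_le_add le_rfl ?_
    refine le_trans (wd_mono_measure ?_ LL') (WW_LL')
    calc mconv (SS P N) (P.withDensity LL) ≤ mconv RR QQ := mcv_mono ih (hPL hP)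
      _ = mconv QQ RR := mcv_comm RR QQ
      _ ≤ WW := conv_bound

include hsupp hP in
lemma mexp_le : mexp P ≤ RR := by
  refine Measure.le_iff.mpr fun s hs => ?_
  rw [mexp, Measure.sum_apply _ hs]
  rw [ENNReal.tsum_eq_iSup_nat (f := fun n => (((n.factorial : ℝ≥0∞))⁻¹ • mpow P n) s)]
  refine iSup_le fun N => ?_
  have : ∑ n ∈ Finset.range N, (((n.factorial : ℝ≥0∞))⁻¹ • mpow P n) s = SS P N s := by
    rw [SS, Measure.finset_sum_apply]
  rw [this]
  exact Measure.le_iff'.mp (SS_le hsupp hP N) s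

end main

lemma RR_eq : RR = Measure.dirac 1 + (2 : ENNReal) • (volume.restrict (Set.Ici (1:ℝ)))
      + (volume.restrict (Set.Ici (1:ℝ))).withDensity
          (fun u => ENNReal.ofReal (Real.log u)) := by
  rw [RR, add_assoc]
  congr 1
  have h1 : m0.withDensity (fun u => ENNReal.ofReal (2 + Real.log u))
      = m0.withDensity ((fun _ => (2:ℝ≥0∞)) + fun u => ENNReal.ofReal (Real.log u)) := by
    refine withDensity_congr_ae (ae_restrict_of_forall_mem measurableSet_Ici fun u hu => ?_)
    simp only [Pi.add_apply]
    rw [ENNReal.ofReal_add (by norm_num) (Real.log_nonneg hu)]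
    norm_num
  have hg : Measurable (fun u : ℝ => ENNReal.ofReal (Real.log u)) := LL_meas
  rw [h1, withDensity_add_right _ hg, withDensity_const, m0]

end Aux

theorem stmt_8 (P : Measure ℝ) (hsupp : P (Set.Iio 1) = 0)
    (hP : P ≤ (2 : ENNReal) •
      ((volume.restrict (Set.Ici (1:ℝ))).withDensity
        (fun u => ENNReal.ofReal ((1 - u⁻¹) / Real.log u)))) :
    mexp P ≤ Measure.dirac 1 + (2 : ENNReal) • (volume.restrict (Set.Ici (1:ℝ)))
      + (volume.restrict (Set.Ici (1:ℝ))).withDensity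
          (fun u => ENNReal.ofReal (Real.log u)) := by
  rw [← RR_eq]
  exact mexp_le hsupp hP
end

section
/- For all $\theta \in [-\pi/2, \pi/2]$ with $\theta \ne 0$, one has $\left|\frac{1}{\theta} - \cot\theta\right| < \frac{2}{\pi}$, and moreover $\arctan(2/\pi) < \pi/5$. -/
open Real Set

private noncomputable def fθ : ℝ → ℝ := fun x => 1/x - Real.cos x / Real.sin x

private lemma fθ_mono : StrictMonoOn fθ (Set.Ioc 0 (π/2)) := by
  apply strictMonoOn_of_deriv_pos (convex_Ioc 0 (π/2))
  · intro x hx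
    have hx0 : x ≠ 0 := ne_of_gt hx.1
    have hs : Real.sin x ≠ 0 := by
      have := Real.sin_pos_of_pos_of_lt_pi hx.1 (lt_of_le_of_lt hx.2 (by linarith [Real.pi_pos]))
      linarith
    exact ((continuousAt_const.div continuousAt_id hx0).sub
      (Real.continuous_cos.continuousAt.div Real.continuous_sin.continuousAt hs)).continuousWithinAt
  · intro x hx
    rw [interior_Ioc] at hx
    have hx0 : 0 < x := hx.1
    have hx2 : x < π/2 := hx.2
    have hsin : 0 < Real.sin x := Real.sin_pos_of_pos_of_lt_pi hx0 (by linarith [Real.pi_pos])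
    have h1 : HasDerivAt (fun y : ℝ => 1/y) (-(x^2)⁻¹) x := by
      simpa [one_div] using hasDerivAt_inv (ne_of_gt hx0)
    have h2 : HasDerivAt (fun y => Real.cos y / Real.sin y)
        ((-Real.sin x * Real.sin x - Real.cos x * Real.cos x) / (Real.sin x)^2) x :=
      (Real.hasDerivAt_cos x).div (Real.hasDerivAt_sin x) (ne_of_gt hsin)
    have h3 : HasDerivAt fθ ((Real.sin x ^ 2)⁻¹ - (x^2)⁻¹) x := by
      have := h1.sub h2
      have hc : -Real.sin x * Real.sin x - Real.cos x * Real.cos x = -1 := by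
        nlinarith [Real.sin_sq_add_cos_sq x]
      rw [hc] at this
      have e : (Real.sin x ^ 2)⁻¹ - (x^2)⁻¹ = -(x ^ 2)⁻¹ - -1 / Real.sin x ^ 2 := by ring
      rw [e]
      exact this
    rw [h3.deriv]
    have hlt : Real.sin x < x := Real.sin_lt hx0
    have : Real.sin x ^ 2 < x ^ 2 := by nlinarith
    have hpos : 0 < Real.sin x ^ 2 := by positivity
    have := one_div_lt_one_div_of_lt hpos this
    simp only [one_div] at this
    linarith

private lemma key (θ : ℝ) (h0 : 0 < θ) (h2 : θ < π/2) :
    0 < 1/θ - Real.cos θ / Real.sin θ ∧ 1/θ - Real.cos θ / Real.sin θ < 2/π := by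
  have hpi := Real.pi_pos
  have hsin : 0 < Real.sin θ := Real.sin_pos_of_pos_of_lt_pi h0 (by linarith)
  have hcos : 0 < Real.cos θ := Real.cos_pos_of_mem_Ioo ⟨by linarith, h2⟩
  constructor
  · have htan := Real.lt_tan h0 h2
    rw [Real.tan_eq_sin_div_cos, lt_div_iff₀ hcos] at htan
    have : Real.cos θ / Real.sin θ < 1/θ := by
      rw [div_lt_div_iff₀ hsin h0]
      nlinarith
    linarith
  · have := fθ_mono (a := θ) (b := π/2) ⟨h0, le_of_lt h2⟩ ⟨by linarith, le_refl _⟩ h2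
    have hend : fθ (π/2) = 2/π := by
      show 1/(π/2) - Real.cos (π/2) / Real.sin (π/2) = 2/π
      rw [Real.cos_pi_div_two, Real.sin_pi_div_two, zero_div, sub_zero, one_div_div]
    rw [hend] at this
    exact this

theorem stmt_10 :
    (∀ θ : ℝ, 0 < |θ| → |θ| < π / 2 → |1/θ - Real.cos θ / Real.sin θ| < 2/π) ∧
    (1/(π/2) - Real.cos (π/2) / Real.sin (π/2) = 2/π) ∧
    (1/(-(π/2)) - Real.cos (-(π/2)) / Real.sin (-(π/2)) = -(2/π)) ∧
    Real.arctan (2/π) < π/5 := by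
  have hpi := Real.pi_pos
  have hπ2 : 0 < 2/π := by positivity
  refine ⟨?_, ?_, ?_, ?_⟩
  · intro θ hθ0 hθ2
    rcases lt_or_gt_of_ne (fun h : θ = 0 => by simp [h] at hθ0) with hneg | hpos
    · have h0 : 0 < -θ := by linarith
      have h2 : -θ < π/2 := by rwa [abs_of_neg hneg] at hθ2
      obtain ⟨ha, hb⟩ := key (-θ) h0 h2
      have hodd : 1/θ - Real.cos θ / Real.sin θ
          = -(1/(-θ) - Real.cos (-θ) / Real.sin (-θ)) := by
        simp only [Real.cos_neg, Real.sin_neg, div_neg, one_div, inv_neg]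
        ring
      rw [hodd, abs_neg, abs_of_pos ha]
      exact hb
    · have h2 : θ < π/2 := by rwa [abs_of_pos hpos] at hθ2
      obtain ⟨ha, hb⟩ := key θ hpos h2
      rw [abs_of_pos ha]
      exact hb
  · rw [Real.cos_pi_div_two, Real.sin_pi_div_two, zero_div, sub_zero, one_div_div]
  · rw [Real.cos_neg, Real.sin_neg, Real.cos_pi_div_two, Real.sin_pi_div_two, zero_div,
      sub_zero, one_div, inv_neg, ← one_div, one_div_div]
  · have h5a : (2.236 : ℝ) < Real.sqrt 5 := by
      nlinarith [Real.sq_sqrt (by norm_num : (5:ℝ) ≥ 0), Real.sqrt_nonneg 5]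
    have h5b : Real.sqrt 5 < 2.2361 := by
      nlinarith [Real.sq_sqrt (by norm_num : (5:ℝ) ≥ 0), Real.sqrt_nonneg 5]
    have hcos : Real.cos (π/5) = (1 + Real.sqrt 5)/4 := Real.cos_pi_div_five
    have h55 : 0 < π/5 := by linarith
    have h52 : π/5 < π/2 := by linarith
    have hsin : 0 < Real.sin (π/5) := Real.sin_pos_of_pos_of_lt_pi h55 (by linarith)
    have hsq : Real.sin (π/5)^2 = (5 - Real.sqrt 5)/8 := by
      have := Real.sin_sq_add_cos_sq (π/5)
      rw [hcos] at this
      have h5 : Real.sqrt 5 ^ 2 = 5 := Real.sq_sqrt (by norm_num)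
      nlinarith
    have hsinlb : 0.58 < Real.sin (π/5) := by nlinarith
    have hcospos : 0 < Real.cos (π/5) := Real.cos_pos_of_mem_Ioo ⟨by linarith, h52⟩
    have htan : 2/π < Real.tan (π/5) := by
      rw [Real.tan_eq_sin_div_cos, div_lt_div_iff₀ hpi hcospos, hcos]
      nlinarith [Real.pi_gt_d6]
    calc Real.arctan (2/π) < Real.arctan (Real.tan (π/5)) := Real.arctan_strictMono htan
      _ = π/5 := Real.arctan_tan (by linarith) h52
end

section
/- Let $\kappa = 3/2$, $T = x^{4}$ with $x \ge 2$, and let $dN$ be a measure on $[1,\infty)$ with $dN(u) \le \delta_{1}(u) + 2\,du + (\log u)\,du$. Then $x^{\kappa}\int_{1^{-}}^{\infty}\frac{dN(u)}{u^{\kappa}(1+T|\log(x/u)|)} \ll \log x$, with an absolute implied constant. -/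
open MeasureTheory Real

-- 2^(3/2) ≤ 3
lemma two_rpow_3half_le : (2:ℝ) ^ ((3:ℝ)/2) ≤ 3 := by
  have h0 : (0:ℝ) ≤ 2 := by norm_num
  have h : ((2:ℝ) ^ ((3:ℝ)/2)) ^ (2:ℕ) = 8 := by
    rw [← Real.rpow_natCast ((2:ℝ) ^ ((3:ℝ)/2)) 2, ← Real.rpow_mul h0]
    norm_num
  nlinarith [Real.rpow_nonneg h0 ((3:ℝ)/2)]

-- 5 ≤ 2^(5/2)
lemma five_le_two_rpow : (5:ℝ) ≤ (2:ℝ) ^ ((5:ℝ)/2) := by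
  have h0 : (0:ℝ) ≤ 2 := by norm_num
  have h : ((2:ℝ) ^ ((5:ℝ)/2)) ^ (2:ℕ) = 32 := by
    rw [← Real.rpow_natCast ((2:ℝ) ^ ((5:ℝ)/2)) 2, ← Real.rpow_mul h0]
    norm_num
  nlinarith [Real.rpow_nonneg h0 ((5:ℝ)/2)]

lemma log_le_four_rpow {u : ℝ} (hu : 1 ≤ u) : Real.log u ≤ 4 * u ^ ((1:ℝ)/4) := by
  have hu0 : (0:ℝ) < u := lt_of_lt_of_le one_pos hu
  have h1 : Real.log (u ^ ((1:ℝ)/4)) = (1/4) * Real.log u := Real.log_rpow hu0 _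
  have h2 : Real.log (u ^ ((1:ℝ)/4)) ≤ u ^ ((1:ℝ)/4) - 1 :=
    Real.log_le_sub_one_of_pos (Real.rpow_pos_of_pos hu0 _)
  nlinarith [Real.rpow_nonneg hu0.le ((1:ℝ)/4)]

lemma core_ineq {x u : ℝ} (hx : 2 ≤ x) (hu : 1 ≤ u) (hxu : x ≤ 2*u) (hux : u ≤ 2*x) :
    x ^ ((3:ℝ)/2) * (2 + Real.log u) ≤ 15 * Real.log x * u ^ ((3:ℝ)/2) := by
  have hu0 : (0:ℝ) < u := lt_of_lt_of_le one_pos hu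
  have hx0 : (0:ℝ) < x := by linarith
  have hL : Real.log 2 ≤ Real.log x := Real.log_le_log (by norm_num) hx
  have hL2 : (0.6931471803: ℝ) < Real.log 2 := Real.log_two_gt_d9
  have h1 : x ^ ((3:ℝ)/2) ≤ 3 * u ^ ((3:ℝ)/2) := by
    have h := Real.rpow_le_rpow hx0.le hxu (by norm_num : (0:ℝ) ≤ 3/2)
    rw [Real.mul_rpow (by norm_num) hu0.le] at h
    nlinarith [two_rpow_3half_le, Real.rpow_nonneg hu0.le ((3:ℝ)/2)]
  have h2 : 2 + Real.log u ≤ 5 * Real.log x := by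
    have hu2x : Real.log u ≤ Real.log (2*x) := Real.log_le_log hu0 hux
    rw [Real.log_mul (by norm_num) (ne_of_gt hx0)] at hu2x
    nlinarith
  have hnum : 0 ≤ 2 + Real.log u := by
    have := Real.log_nonneg hu; linarith
  nlinarith [mul_le_mul h1 h2 hnum (by positivity : (0:ℝ) ≤ 3 * u ^ ((3:ℝ)/2))]

lemma near_case {x u : ℝ} (hx : 2 ≤ x) (hu : 1 ≤ u) (h1 : x - 1 ≤ u) (h2 : u ≤ x + 1) :
    x ^ ((3:ℝ)/2) * ((2 + Real.log u) * (1 / (u ^ ((3:ℝ)/2) * (1 + x^4 * |Real.log (x/u)|))))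
      ≤ 20 * Real.log x := by
  have hu0 : (0:ℝ) < u := lt_of_lt_of_le one_pos hu
  have hx0 : (0:ℝ) < x := by linarith
  have hU : (0:ℝ) < u ^ ((3:ℝ)/2) := Real.rpow_pos_of_pos hu0 _
  have habs : (0:ℝ) ≤ x^4 * |Real.log (x/u)| := by positivity
  have hD : u ^ ((3:ℝ)/2) ≤ u ^ ((3:ℝ)/2) * (1 + x^4 * |Real.log (x/u)|) := by nlinarith
  have hA : 0 ≤ x ^ ((3:ℝ)/2) * (2 + Real.log u) :=
    mul_nonneg (Real.rpow_nonneg hx0.le _) (by nlinarith [Real.log_nonneg hu])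
  have hcore := core_ineq hx hu (by linarith) (by linarith)
  have hinv : 1 / (u ^ ((3:ℝ)/2) * (1 + x^4 * |Real.log (x/u)|)) ≤ 1 / u ^ ((3:ℝ)/2) :=
    one_div_le_one_div_of_le hU hD
  have hL : (0:ℝ) ≤ Real.log x := Real.log_nonneg (by linarith)
  calc x ^ ((3:ℝ)/2) * ((2 + Real.log u) * (1 / (u ^ ((3:ℝ)/2) * (1 + x^4 * |Real.log (x/u)|))))
      = (x ^ ((3:ℝ)/2) * (2 + Real.log u)) * (1 / (u ^ ((3:ℝ)/2) * (1 + x^4 * |Real.log (x/u)|))) := by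
        ring
    _ ≤ (x ^ ((3:ℝ)/2) * (2 + Real.log u)) * (1 / u ^ ((3:ℝ)/2)) :=
        mul_le_mul_of_nonneg_left hinv hA
    _ ≤ (15 * Real.log x * u ^ ((3:ℝ)/2)) * (1 / u ^ ((3:ℝ)/2)) :=
        mul_le_mul_of_nonneg_right hcore (by positivity)
    _ = 15 * Real.log x := by field_simp
    _ ≤ 20 * Real.log x := by linarith

lemma far_case {x u : ℝ} (hx : 2 ≤ x) (hu : 1 ≤ u) (hl : x/2 ≤ u) (hr : u ≤ 2*x)
    (hfar : u ≤ x - 1 ∨ x + 1 ≤ u) :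
    x ^ ((3:ℝ)/2) * ((2 + Real.log u) * (1 / (u ^ ((3:ℝ)/2) * (1 + x^4 * |Real.log (x/u)|))))
      ≤ 40 * Real.log x / x^3 := by
  have hu0 : (0:ℝ) < u := lt_of_lt_of_le one_pos hu
  have hx0 : (0:ℝ) < x := by linarith
  have hU : (0:ℝ) < u ^ ((3:ℝ)/2) := Real.rpow_pos_of_pos hu0 _
  have hA : 0 ≤ x ^ ((3:ℝ)/2) * (2 + Real.log u) :=
    mul_nonneg (Real.rpow_nonneg hx0.le _) (by nlinarith [Real.log_nonneg hu])
  have hcore := core_ineq hx hu (by linarith) (by linarith)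
  have hL : (0:ℝ) ≤ Real.log x := Real.log_nonneg (by linarith)
  -- lower bound on |log (x/u)|
  have hlb : 1/(2*x) ≤ |Real.log (x/u)| := by
    rcases hfar with h | h
    · have hlog : Real.log (u/x) ≤ u/x - 1 := Real.log_le_sub_one_of_pos (by positivity)
      have e : Real.log (x/u) = Real.log x - Real.log u :=
        Real.log_div (ne_of_gt hx0) (ne_of_gt hu0)
      have e2 : Real.log (u/x) = Real.log u - Real.log x :=
        Real.log_div (ne_of_gt hu0) (ne_of_gt hx0)
      have h4 : u/x ≤ 1 - 1/(2*x) := by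
        rw [div_le_iff₀ hx0]
        have hexp : (1 - 1/(2*x))*x = x - 1/2 := by field_simp
        rw [hexp]; linarith
      have key : 1/(2*x) ≤ Real.log (x/u) := by
        rw [e]; rw [e2] at hlog; linarith
      exact key.trans (le_abs_self _)
    · have hlog : Real.log (x/u) ≤ x/u - 1 := Real.log_le_sub_one_of_pos (by positivity)
      have h4 : x/u ≤ 1 - 1/(2*x) := by
        rw [div_le_iff₀ hu0]
        have h5 : u/(2*x) ≤ 1 := by rw [div_le_one (by linarith)]; linarith
        have hexp : (1 - 1/(2*x))*u = u - u/(2*x) := by ring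
        rw [hexp]
        have h6 : u/(2*x) * (2*x) = u := by field_simp
        nlinarith [div_nonneg hu0.le (by linarith : (0:ℝ) ≤ 2*x)]
      have key : 1/(2*x) ≤ -(Real.log (x/u)) := by linarith
      exact key.trans (neg_le_abs _)
  -- denominator lower bound
  have hx4 : (0:ℝ) < x^4 := by positivity
  have hD2 : u ^ ((3:ℝ)/2) * (x^3/2) ≤ u ^ ((3:ℝ)/2) * (1 + x^4 * |Real.log (x/u)|) := by
    have h6 : x^3/2 ≤ 1 + x^4 * |Real.log (x/u)| := by
      have h7 : x^4 * (1/(2*x)) ≤ x^4 * |Real.log (x/u)| :=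
        mul_le_mul_of_nonneg_left hlb hx4.le
      have h8 : x^4 * (1/(2*x)) = x^3/2 := by field_simp
      linarith
    exact mul_le_mul_of_nonneg_left h6 hU.le
  have hpos2 : (0:ℝ) < u ^ ((3:ℝ)/2) * (x^3/2) := by positivity
  have hinv : 1 / (u ^ ((3:ℝ)/2) * (1 + x^4 * |Real.log (x/u)|))
      ≤ 1 / (u ^ ((3:ℝ)/2) * (x^3/2)) := one_div_le_one_div_of_le hpos2 hD2
  have hUne : u ^ ((3:ℝ)/2) ≠ 0 := ne_of_gt hU
  calc x ^ ((3:ℝ)/2) * ((2 + Real.log u) * (1 / (u ^ ((3:ℝ)/2) * (1 + x^4 * |Real.log (x/u)|))))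
      = (x ^ ((3:ℝ)/2) * (2 + Real.log u)) * (1 / (u ^ ((3:ℝ)/2) * (1 + x^4 * |Real.log (x/u)|))) := by
        ring
    _ ≤ (x ^ ((3:ℝ)/2) * (2 + Real.log u)) * (1 / (u ^ ((3:ℝ)/2) * (x^3/2))) :=
        mul_le_mul_of_nonneg_left hinv hA
    _ ≤ (15 * Real.log x * u ^ ((3:ℝ)/2)) * (1 / (u ^ ((3:ℝ)/2) * (x^3/2))) :=
        mul_le_mul_of_nonneg_right hcore (by positivity)
    _ = 30 * Real.log x / x^3 := by field_simp; ring
    _ ≤ 40 * Real.log x / x^3 := by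
        apply div_le_div_of_nonneg_right ?_ (by positivity)
        linarith

lemma outer_case {x u : ℝ} (hx : 2 ≤ x) (hu : 1 ≤ u) (hout : 2*u ≤ x ∨ 2*x ≤ u) :
    x ^ ((3:ℝ)/2) * ((2 + Real.log u) * (1 / (u ^ ((3:ℝ)/2) * (1 + x^4 * |Real.log (x/u)|))))
      ≤ 6 * u ^ (-((5:ℝ)/4)) := by
  have hu0 : (0:ℝ) < u := lt_of_lt_of_le one_pos hu
  have hx0 : (0:ℝ) < x := by linarith
  have hU : (0:ℝ) < u ^ ((3:ℝ)/2) := Real.rpow_pos_of_pos hu0 _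
  have hA : 0 ≤ x ^ ((3:ℝ)/2) * (2 + Real.log u) :=
    mul_nonneg (Real.rpow_nonneg hx0.le _) (by nlinarith [Real.log_nonneg hu])
  have hL2 : (0.6931471803: ℝ) < Real.log 2 := Real.log_two_gt_d9
  -- |log (x/u)| ≥ log 2
  have hlb : Real.log 2 ≤ |Real.log (x/u)| := by
    rcases hout with h | h
    · have h2 : (2:ℝ) ≤ x/u := by rw [le_div_iff₀ hu0]; linarith
      exact (Real.log_le_log two_pos h2).trans (le_abs_self _)
    · have h2 : (2:ℝ) ≤ u/x := by rw [le_div_iff₀ hx0]; linarith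
      have e : Real.log (x/u) = -Real.log (u/x) := by
        rw [← Real.log_inv]; congr 1; field_simp
      rw [e, abs_neg]
      exact (Real.log_le_log two_pos h2).trans (le_abs_self _)
  have hx4 : (0:ℝ) < x^4 := by positivity
  have hD2 : u ^ ((3:ℝ)/2) * (Real.log 2 * x^4) ≤ u ^ ((3:ℝ)/2) * (1 + x^4 * |Real.log (x/u)|) := by
    have h6 : Real.log 2 * x^4 ≤ 1 + x^4 * |Real.log (x/u)| := by
      have h7 : x^4 * Real.log 2 ≤ x^4 * |Real.log (x/u)| :=
        mul_le_mul_of_nonneg_left hlb hx4.le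
      linarith
    exact mul_le_mul_of_nonneg_left h6 hU.le
  have hpos2 : (0:ℝ) < u ^ ((3:ℝ)/2) * (Real.log 2 * x^4) := by positivity
  have hinv : 1 / (u ^ ((3:ℝ)/2) * (1 + x^4 * |Real.log (x/u)|))
      ≤ 1 / (u ^ ((3:ℝ)/2) * (Real.log 2 * x^4)) := one_div_le_one_div_of_le hpos2 hD2
  -- numerator bound : A ≤ (log 2 * x^4) * (6 * u^(1/4))
  have hq : (0:ℝ) < u ^ ((1:ℝ)/4) := Real.rpow_pos_of_pos hu0 _
  have hq1 : (1:ℝ) ≤ u ^ ((1:ℝ)/4) := Real.one_le_rpow hu (by norm_num)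
  have hnum1 : 2 + Real.log u ≤ 6 * u ^ ((1:ℝ)/4) := by
    have := log_le_four_rpow hu; linarith
  have hx52 : (5:ℝ) ≤ x ^ ((5:ℝ)/2) := by
    calc (5:ℝ) ≤ (2:ℝ) ^ ((5:ℝ)/2) := five_le_two_rpow
      _ ≤ x ^ ((5:ℝ)/2) := Real.rpow_le_rpow (by norm_num) hx (by norm_num)
  have hxsplit : x ^ ((3:ℝ)/2) * x ^ ((5:ℝ)/2) = x^4 := by
    rw [← Real.rpow_natCast x 4, ← Real.rpow_add hx0]; norm_num
  have hnum2 : x ^ ((3:ℝ)/2) ≤ Real.log 2 * x^4 := by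
    nlinarith [Real.rpow_nonneg hx0.le ((3:ℝ)/2)]
  have hAle : x ^ ((3:ℝ)/2) * (2 + Real.log u) ≤ (Real.log 2 * x^4) * (6 * u ^ ((1:ℝ)/4)) :=
    mul_le_mul hnum2 hnum1 (by nlinarith [Real.log_nonneg hu]) (by positivity)
  have hUne : u ^ ((3:ℝ)/2) ≠ 0 := ne_of_gt hU
  have hsplit : u ^ (-((5:ℝ)/4)) * u ^ ((3:ℝ)/2) = u ^ ((1:ℝ)/4) := by
    rw [← Real.rpow_add hu0]; norm_num
  calc x ^ ((3:ℝ)/2) * ((2 + Real.log u) * (1 / (u ^ ((3:ℝ)/2) * (1 + x^4 * |Real.log (x/u)|))))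
      = (x ^ ((3:ℝ)/2) * (2 + Real.log u)) * (1 / (u ^ ((3:ℝ)/2) * (1 + x^4 * |Real.log (x/u)|))) := by
        ring
    _ ≤ (x ^ ((3:ℝ)/2) * (2 + Real.log u)) * (1 / (u ^ ((3:ℝ)/2) * (Real.log 2 * x^4))) :=
        mul_le_mul_of_nonneg_left hinv hA
    _ ≤ ((Real.log 2 * x^4) * (6 * u ^ ((1:ℝ)/4))) * (1 / (u ^ ((3:ℝ)/2) * (Real.log 2 * x^4))) :=
        mul_le_mul_of_nonneg_right hAle (by positivity)
    _ = 6 * u ^ (-((5:ℝ)/4)) := by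
        rw [← hsplit]; field_simp

lemma pointwise_bound_s12 {x u : ℝ} (hx : 2 ≤ x) (hu : 1 ≤ u) :
    ENNReal.ofReal (x ^ ((3:ℝ)/2) * ((2 + Real.log u) *
        (1 / (u ^ ((3:ℝ)/2) * (1 + x^4 * |Real.log (x/u)|)))))
      ≤ ENNReal.ofReal (6 * u ^ (-((5:ℝ)/4)))
        + (Set.Icc (x-1) (x+1)).indicator (fun _ => ENNReal.ofReal (20 * Real.log x)) u
        + (Set.Icc (x/2) (2*x)).indicator (fun _ => ENNReal.ofReal (40 * Real.log x / x^3)) u := by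
  by_cases hin : x/2 ≤ u ∧ u ≤ 2*x
  · by_cases hnear : x - 1 ≤ u ∧ u ≤ x + 1
    · have hmem : u ∈ Set.Icc (x-1) (x+1) := ⟨hnear.1, hnear.2⟩
      rw [Set.indicator_of_mem hmem]
      refine le_trans (ENNReal.ofReal_le_ofReal (near_case hx hu hnear.1 hnear.2)) ?_
      exact (self_le_add_left _ _).trans (self_le_add_right _ _)
    · have hfar : u ≤ x - 1 ∨ x + 1 ≤ u := by
        rcases not_and_or.mp hnear with h | h
        · left; linarith [not_le.mp h]
        · right; linarith [not_le.mp h]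
      have hmem : u ∈ Set.Icc (x/2) (2*x) := ⟨hin.1, hin.2⟩
      rw [Set.indicator_of_mem hmem]
      refine le_trans (ENNReal.ofReal_le_ofReal (far_case hx hu hin.1 hin.2 hfar)) ?_
      exact self_le_add_left _ _
  · have hout : 2*u ≤ x ∨ 2*x ≤ u := by
      rcases not_and_or.mp hin with h | h
      · left; linarith [not_le.mp h]
      · right; linarith [not_le.mp h]
    refine le_trans (ENNReal.ofReal_le_ofReal (outer_case hx hu hout)) ?_
    exact (self_le_add_right _ _).trans (self_le_add_right _ _)

lemma meas_f (x : ℝ) : Measurable fun u : ℝ =>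
    ENNReal.ofReal (1 / (u ^ ((3:ℝ)/2) * (1 + x^4 * |Real.log (x/u)|))) := by
  have m1 : Measurable fun u:ℝ => u ^ ((3:ℝ)/2) := by measurability
  have m2 : Measurable fun u:ℝ => |Real.log (x/u)| :=
    (Real.measurable_log.comp (measurable_const.div measurable_id)).abs
  exact ENNReal.measurable_ofReal.comp
    (measurable_const.div (m1.mul ((measurable_const.mul m2).const_add 1)))

lemma meas_g : Measurable fun u : ℝ => ENNReal.ofReal (6 * u ^ (-((5:ℝ)/4))) := by
  have m1 : Measurable fun u:ℝ => u ^ (-((5:ℝ)/4)) := by measurability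
  exact ENNReal.measurable_ofReal.comp (measurable_const.mul m1)

lemma T1_eq : ∫⁻ u in Set.Ici (1:ℝ), ENNReal.ofReal (6 * u ^ (-((5:ℝ)/4))) = ENNReal.ofReal 24 := by
  have hInt : IntegrableOn (fun u : ℝ => 6 * u ^ (-((5:ℝ)/4))) (Set.Ici (1:ℝ)) := by
    rw [integrableOn_Ici_iff_integrableOn_Ioi]
    exact (integrableOn_Ioi_rpow_of_lt (by norm_num) one_pos).const_mul 6
  have hnn : 0 ≤ᵐ[volume.restrict (Set.Ici (1:ℝ))] fun u : ℝ => 6 * u ^ (-((5:ℝ)/4)) := by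
    filter_upwards [ae_restrict_mem measurableSet_Ici] with u hu
    have hu0 : (0:ℝ) < u := lt_of_lt_of_le one_pos hu
    positivity
  rw [← ofReal_integral_eq_lintegral_ofReal hInt hnn]
  congr 1
  rw [MeasureTheory.integral_Ici_eq_integral_Ioi, MeasureTheory.integral_const_mul,
    integral_Ioi_rpow_of_lt (by norm_num) one_pos]
  rw [Real.one_rpow]
  norm_num

lemma majorant_integral {x : ℝ} (hx : 2 ≤ x) :
    (∫⁻ u in Set.Ici (1:ℝ), (ENNReal.ofReal (6 * u ^ (-((5:ℝ)/4)))
        + (Set.Icc (x-1) (x+1)).indicator (fun _ => ENNReal.ofReal (20 * Real.log x)) u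
        + (Set.Icc (x/2) (2*x)).indicator (fun _ => ENNReal.ofReal (40 * Real.log x / x^3)) u))
      ≤ ENNReal.ofReal (97 * Real.log x) := by
  have hx0 : (0:ℝ) < x := by linarith
  have hL2 : (0.6931471803: ℝ) < Real.log 2 := Real.log_two_gt_d9
  have hLx : Real.log 2 ≤ Real.log x := Real.log_le_log two_pos hx
  have hL : (0:ℝ) ≤ Real.log x := by linarith
  have mind1 : Measurable ((Set.Icc (x-1) (x+1)).indicator
      (fun _ : ℝ => ENNReal.ofReal (20 * Real.log x))) :=
    measurable_const.indicator measurableSet_Icc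
  have mind2 : Measurable ((Set.Icc (x/2) (2*x)).indicator
      (fun _ : ℝ => ENNReal.ofReal (40 * Real.log x / x^3))) :=
    measurable_const.indicator measurableSet_Icc
  have hsplit : (∫⁻ u in Set.Ici (1:ℝ), (ENNReal.ofReal (6 * u ^ (-((5:ℝ)/4)))
        + (Set.Icc (x-1) (x+1)).indicator (fun _ => ENNReal.ofReal (20 * Real.log x)) u
        + (Set.Icc (x/2) (2*x)).indicator (fun _ => ENNReal.ofReal (40 * Real.log x / x^3)) u))
      = (∫⁻ u in Set.Ici (1:ℝ), ENNReal.ofReal (6 * u ^ (-((5:ℝ)/4))))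
        + (∫⁻ u in Set.Ici (1:ℝ), (Set.Icc (x-1) (x+1)).indicator
            (fun _ => ENNReal.ofReal (20 * Real.log x)) u)
        + (∫⁻ u in Set.Ici (1:ℝ), (Set.Icc (x/2) (2*x)).indicator
            (fun _ => ENNReal.ofReal (40 * Real.log x / x^3)) u) := by
    rw [lintegral_add_left (show Measurable fun u : ℝ => ENNReal.ofReal (6 * u ^ (-((5:ℝ)/4)))
          + (Set.Icc (x-1) (x+1)).indicator (fun _ => ENNReal.ofReal (20 * Real.log x)) u from meas_g.add mind1), lintegral_add_left meas_g]
  rw [hsplit, T1_eq]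
  have hind1 : (∫⁻ u in Set.Ici (1:ℝ), (Set.Icc (x-1) (x+1)).indicator
      (fun _ => ENNReal.ofReal (20 * Real.log x)) u) ≤ ENNReal.ofReal (40 * Real.log x) := by
    refine le_trans (lintegral_indicator_const_le _ _) ?_
    refine le_trans (mul_le_mul_right (Measure.restrict_apply_le _ _) _) ?_
    rw [Real.volume_Icc, show x + 1 - (x - 1) = 2 by ring, ← ENNReal.ofReal_mul (by linarith)]
    apply ENNReal.ofReal_le_ofReal; linarith
  have hind2 : (∫⁻ u in Set.Ici (1:ℝ), (Set.Icc (x/2) (2*x)).indicator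
      (fun _ => ENNReal.ofReal (40 * Real.log x / x^3)) u)
      ≤ ENNReal.ofReal (15 * Real.log x) := by
    refine le_trans (lintegral_indicator_const_le _ _) ?_
    refine le_trans (mul_le_mul_right (Measure.restrict_apply_le _ _) _) ?_
    rw [Real.volume_Icc, ← ENNReal.ofReal_mul (by positivity)]
    apply ENNReal.ofReal_le_ofReal
    have he : 40 * Real.log x / x^3 * (2*x - x/2) = 60 * Real.log x / x^2 := by
      field_simp; ring
    rw [he, div_le_iff₀ (by positivity)]
    nlinarith [mul_nonneg hL (show (0:ℝ) ≤ x^2 - 4 by nlinarith)]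
  refine le_trans (add_le_add (add_le_add le_rfl hind1) hind2) ?_
  rw [← ENNReal.ofReal_add (by norm_num) (by linarith), ← ENNReal.ofReal_add (by positivity) (by linarith)]
  apply ENNReal.ofReal_le_ofReal
  nlinarith

lemma dirac_bound {x : ℝ} (hx : 2 ≤ x) :
    ENNReal.ofReal (x ^ ((3:ℝ)/2)) *
      ENNReal.ofReal (1 / ((1:ℝ) ^ ((3:ℝ)/2) * (1 + x^4 * |Real.log (x/1)|)))
      ≤ ENNReal.ofReal (3 * Real.log x) := by
  have hx0 : (0:ℝ) < x := by linarith
  have hL2 : (0.6931471803: ℝ) < Real.log 2 := Real.log_two_gt_d9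
  have hLx : Real.log 2 ≤ Real.log x := Real.log_le_log two_pos hx
  have hL : (0:ℝ) ≤ Real.log x := by linarith
  rw [div_one, Real.one_rpow, one_mul, abs_of_nonneg hL,
    ← ENNReal.ofReal_mul (by positivity)]
  apply ENNReal.ofReal_le_ofReal
  have hpos : (0:ℝ) < 1 + x^4 * Real.log x := by
    have : (0:ℝ) ≤ x^4 * Real.log x := mul_nonneg (by positivity) hL
    linarith
  rw [mul_one_div, div_le_iff₀ hpos]
  have h1 : x ^ ((3:ℝ)/2) ≤ x^4 := by
    calc x ^ ((3:ℝ)/2) ≤ x ^ ((4:ℕ):ℝ) :=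
          Real.rpow_le_rpow_of_exponent_le (by linarith) (by norm_num)
      _ = x^4 := Real.rpow_natCast x 4
  have hx4 : (0:ℝ) < x^4 := by positivity
  nlinarith
theorem stmt_12 :
    ∃ C > (0:ℝ), ∀ N : Measure ℝ,
      N ≤ Measure.dirac 1 + (2 : ENNReal) • (volume.restrict (Set.Ici (1:ℝ)))
          + (volume.restrict (Set.Ici (1:ℝ))).withDensity
              (fun u => ENNReal.ofReal (Real.log u)) →
      ∀ x : ℝ, 2 ≤ x →
        ENNReal.ofReal (x ^ ((3:ℝ)/2)) *
          ∫⁻ u, ENNReal.ofReal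
            (1 / (u ^ ((3:ℝ)/2) * (1 + x^4 * |Real.log (x/u)|))) ∂N
        ≤ ENNReal.ofReal (C * Real.log x) := by
  refine ⟨100, by norm_num, ?_⟩
  intro N hN x hx
  have hx0 : (0:ℝ) < x := by linarith
  have hL : (0:ℝ) ≤ Real.log x := Real.log_nonneg (by linarith)
  set f : ℝ → ENNReal :=
    fun u => ENNReal.ofReal (1 / (u ^ ((3:ℝ)/2) * (1 + x^4 * |Real.log (x/u)|))) with hfdef
  have hfm : Measurable f := meas_f x
  have hwm : Measurable fun u : ℝ => ENNReal.ofReal (Real.log u) :=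
    ENNReal.measurable_ofReal.comp Real.measurable_log
  set M := ENNReal.ofReal (x ^ ((3:ℝ)/2)) with hMdef
  set I2 := ∫⁻ u in Set.Ici (1:ℝ), f u with hI2
  set I3 := ∫⁻ u in Set.Ici (1:ℝ), ENNReal.ofReal (Real.log u) * f u with hI3
  have hM : ∫⁻ u, f u ∂N ≤ f 1 + 2 * I2 + I3 := by
    refine le_trans (lintegral_mono' hN le_rfl) ?_
    rw [lintegral_add_measure, lintegral_add_measure, lintegral_smul_measure,
      lintegral_dirac' _ hfm,
      lintegral_withDensity_eq_lintegral_mul _ hwm hfm]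
    simp only [Pi.mul_apply, hI2, hI3]
    exact le_rfl
  have e2 : M * (2 * I2) = ∫⁻ u in Set.Ici (1:ℝ), M * (2 * f u) := by
    rw [lintegral_const_mul M (f := fun u => 2 * f u) (measurable_const.mul hfm)]
    congr 1
    rw [lintegral_const_mul 2 hfm]
  have e3 : M * I3 = ∫⁻ u in Set.Ici (1:ℝ), M * (ENNReal.ofReal (Real.log u) * f u) :=
    (lintegral_const_mul M (hwm.mul hfm)).symm
  have hmid : M * (2 * I2) + M * I3
      = ∫⁻ u in Set.Ici (1:ℝ),
          (M * (2 * f u) + M * (ENNReal.ofReal (Real.log u) * f u)) := by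
    rw [e2, e3, ← lintegral_add_left (f := fun u => M * (2 * f u)) (measurable_const.mul (measurable_const.mul hfm))]
  have hptwise : ∀ u ∈ Set.Ici (1:ℝ),
      M * (2 * f u) + M * (ENNReal.ofReal (Real.log u) * f u)
      ≤ ENNReal.ofReal (6 * u ^ (-((5:ℝ)/4)))
        + (Set.Icc (x-1) (x+1)).indicator (fun _ => ENNReal.ofReal (20 * Real.log x)) u
        + (Set.Icc (x/2) (2*x)).indicator (fun _ => ENNReal.ofReal (40 * Real.log x / x^3)) u := by
    intro u hu
    have hu1 : (1:ℝ) ≤ u := hu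
    have hLu : (0:ℝ) ≤ Real.log u := Real.log_nonneg hu1
    have e : M * (2 * f u) + M * (ENNReal.ofReal (Real.log u) * f u)
        = ENNReal.ofReal (x ^ ((3:ℝ)/2) * ((2 + Real.log u) *
            (1 / (u ^ ((3:ℝ)/2) * (1 + x^4 * |Real.log (x/u)|))))) := by
      rw [ENNReal.ofReal_mul (by positivity),
        ENNReal.ofReal_mul (by linarith : (0:ℝ) ≤ 2 + Real.log u),
        ENNReal.ofReal_add (by norm_num) hLu, ENNReal.ofReal_ofNat]
      simp only [hfdef, hMdef]
      ring
    rw [e]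
    exact pointwise_bound_s12 hx hu1
  have hmiddle : M * (2 * I2) + M * I3 ≤ ENNReal.ofReal (97 * Real.log x) := by
    rw [hmid]
    exact le_trans (setLIntegral_mono' measurableSet_Ici hptwise) (majorant_integral hx)
  calc M * ∫⁻ u, f u ∂N ≤ M * (f 1 + 2 * I2 + I3) := mul_le_mul_right hM M
    _ = M * f 1 + (M * (2 * I2) + M * I3) := by ring
    _ ≤ ENNReal.ofReal (3 * Real.log x) + ENNReal.ofReal (97 * Real.log x) :=
        add_le_add (dirac_bound hx) hmiddle
    _ = ENNReal.ofReal (100 * Real.log x) := by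
        rw [← ENNReal.ofReal_add (by linarith) (by linarith)]
        congr 1; ring
end

section
/- Let $\alpha \in (0,1]$, $c > 0$, with $c \le 1$ if $\alpha = 1$. Define sequences by $\log B_{k} \to \infty$, $\tau_{k} = \exp(c(\log B_{k})^{\alpha})$, and let $C_{k} > B_{k}$ be defined by $\frac{B_{k}-A_{k}}{2(\tau_{k}^{2}+1)} + \frac{1}{2}(B_{k} - 1 - \log B_{k} - (C_{k} - 1 - \log C_{k})) = 0$ with $A_{k} = \sqrt{B_{k}}$. Then $C_{k} = B_{k}(1 + O(\exp(-2c(\log B_{k})^{\alpha})))$ as $k \to \infty$. -/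
open Real Filter

theorem stmt_15 (c α : ℝ) (hc : 0 < c) (hα : α ∈ Set.Ioc (0:ℝ) 1)
    (hc1 : α = 1 → c ≤ 1)
    (B C : ℕ → ℝ) (hB1 : ∀ k, 1 < B k)
    (hBtop : Tendsto (fun k => Real.log (B k)) atTop atTop)
    (hBC : ∀ k, B k < C k)
    (hC : ∀ k, (B k - Real.sqrt (B k)) / (2 * ((Real.exp (c * (Real.log (B k)) ^ α))^2 + 1))
        + (1/2) * (B k - 1 - Real.log (B k) - (C k - 1 - Real.log (C k))) = 0) :
    ∃ M > (0:ℝ), ∀ᶠ k in atTop,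
      |C k - B k| ≤ M * B k * Real.exp (-2 * c * (Real.log (B k)) ^ α) := by
  refine ⟨2, by norm_num, ?_⟩
  have hB : Tendsto B atTop atTop := by
    have h := Real.tendsto_exp_atTop.comp hBtop
    refine h.congr fun k => Real.exp_log (lt_trans one_pos (hB1 k))
  filter_upwards [hB.eventually_ge_atTop 2] with k hk2
  set b := B k with hbdef
  set t := Real.exp (c * Real.log b ^ α) with htdef
  have hb1 : (1:ℝ) < b := hB1 k
  have hb0 : (0:ℝ) < b := lt_trans one_pos hb1
  have hCb : b < C k := hBC k
  have hC0 : (0:ℝ) < C k := lt_trans hb0 hCb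
  have ht0 : 0 < t := Real.exp_pos _
  have ht2pos : 0 < t^2 := by positivity
  have hδ : C k - Real.log (C k) - (b - Real.log b) = (b - Real.sqrt b) / (t^2 + 1) := by
    have h := hC k
    have hne : (2 * (t^2 + 1)) ≠ 0 := by positivity
    field_simp at h ⊢
    nlinarith [h]
  have hlog : Real.log (C k) - Real.log b ≤ (C k - b) / b := by
    have h1 : Real.log (C k / b) ≤ C k / b - 1 :=
      Real.log_le_sub_one_of_pos (by positivity)
    rw [Real.log_div (ne_of_gt hC0) (ne_of_gt hb0)] at h1
    have : C k / b - 1 = (C k - b) / b := by field_simp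
    linarith [this ▸ h1]
  have hδge : (C k - b) / 2 ≤ (b - Real.sqrt b) / (t^2 + 1) := by
    have h2 : (C k - b) / b ≤ (C k - b) / 2 := by
      apply div_le_div_of_nonneg_left (by linarith) (by norm_num) hk2
    calc (C k - b) / 2 = (C k - b) - (C k - b) / 2 := by ring
      _ ≤ (C k - b) - (C k - b) / b := by linarith
      _ ≤ (C k - b) - (Real.log (C k) - Real.log b) := by linarith
      _ = C k - Real.log (C k) - (b - Real.log b) := by ring
      _ = (b - Real.sqrt b) / (t^2 + 1) := hδ
  have hsq : 0 ≤ Real.sqrt b := Real.sqrt_nonneg b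
  have hbound : (b - Real.sqrt b) / (t^2 + 1) ≤ b / t^2 := by
    have h3 : b - Real.sqrt b ≤ b := by linarith
    calc (b - Real.sqrt b) / (t^2 + 1) ≤ b / (t^2 + 1) := by
          apply div_le_div_of_nonneg_right h3 (by positivity) |>.trans_eq rfl
      _ ≤ b / t^2 := by
          apply div_le_div_of_nonneg_left (le_of_lt hb0) ht2pos (by linarith)
  have hexp : Real.exp (-2 * c * Real.log b ^ α) = (t^2)⁻¹ := by
    rw [htdef, ← Real.exp_nat_mul, ← Real.exp_neg]
    ring_nf
  rw [abs_of_pos (by linarith : 0 < C k - b), hexp]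
  have : C k - b ≤ 2 * (b / t^2) := by linarith
  calc C k - b ≤ 2 * (b / t^2) := this
    _ = 2 * b * (t^2)⁻¹ := by ring
end
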